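/- arXiv:2203.05615 — 15 statements merged into one kernel-verified Lean document; each statement's English description precedes it below -/
import Mathlib

section
/- Suppose κ is a regular uncountable cardinal, ν ≤ κ is an infinite cardinal, and there is an upper-regressive colouring c : [κ]² → θ such that for every cofinal B ⊆ κ there exists η < ν with otp(c[{η} ⊛ B]) = θ. Then θ ≤ κ, and if ν < cf(θ) then θ = κ. -/
open Cardinal Ordinal Set

/-- The order type of a set of ordinals. -/
noncomputable def otp (S : Set Ordinal.{0}) : Ordinal.{1} :=
  @Ordinal.type S (Subrel (· < ·) S)
    (RelEmbedding.isWellOrder (Subrel.relEmbedding (· < ·) S))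

/-!
Every colour `c η β` lies below `β`, so colouring all of `κ` gives a set of colours of order type
at most `κ`; hence `θ ≤ κ`. If `θ < κ` and `ν < cf θ`, then for each `β ≥ ν` the colours
`c η β`, `η < ν`, are bounded below `θ` by some `h β < θ`. As `κ` is regular and `θ < κ`, some
value `δ` of `h` is taken on a cofinal set `B`; but then every `c[{η} ⊛ B]` with `η < ν` lies
below `δ` and has order type less than `θ`.
-/

theorem otp_le_lift_of_subset_Iio {S : Set Ordinal.{0}} {γ : Ordinal.{0}} (h : S ⊆ Iio γ) :
    otp S ≤ Ordinal.lift.{1} γ := by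
  let : IsWellOrder S (Subrel (· < ·) S) :=
    RelEmbedding.isWellOrder (Subrel.relEmbedding (· < ·) S)
  calc otp S ≤ type (ULift.down.{1} ⁻¹'o ((· < ·) : γ.ToType → γ.ToType → Prop)) :=
        (RelEmbedding.ofMonotone (fun x => ULift.up (ToType.mk ⟨x.1, h x.2⟩))
          (fun a b hab => by simpa [Subrel] using hab)).ordinal_type_le
    _ = Ordinal.lift.{1} γ := by rw [type_ulift, type_toType]

namespace Ordinal

theorem lift_mk_Iio_lt_cof_lift {o a : Ordinal.{u}} (h : o.card < a.cof) :
    Cardinal.lift.{u} #(Iio o) < (lift.{u + 1} a).cof := by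
  rwa [Cardinal.mk_Iio_ordinal, Cardinal.lift_lift, ← lift_cof, Cardinal.lift_lt]

theorem exists_cofinal_fiber {κ : Cardinal.{u}} (hκ : κ.IsRegular) {γ o : Ordinal.{u}}
    (hγ : γ < κ.ord) (ho : o.card < κ) {f : Ordinal.{u} → Ordinal.{u}}
    (hf : ∀ β, γ ≤ β → β < κ.ord → f β < o) :
    ∃ δ < o, ∀ α < κ.ord, ∃ β < κ.ord, γ ≤ β ∧ α ≤ β ∧ f β = δ := by
  by_contra! hfiber
  choose g hgκ hg using hfiber
  have hsup : ⨆ δ : Iio o, g δ.1 δ.2 < κ.ord :=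
    lift_iSup_lt_of_lt_cof (lift_mk_Iio_lt_cof_lift (by rwa [hκ.cof_ord])) fun δ => hgκ δ.1 δ.2
  set β := max (⨆ δ : Iio o, g δ.1 δ.2) γ
  have hβ : β < κ.ord := max_lt hsup hγ
  have hfβ := hf β (le_max_right _ _) hβ
  exact hg _ hfβ β hβ (le_max_right _ _)
    ((Ordinal.le_iSup (fun δ : Iio o => g δ.1 δ.2) ⟨_, hfβ⟩).trans (le_max_left _ _)) rfl

theorem exists_cofinal_colors_lt {κ ν θ : Cardinal.{u}} (hκ : κ.IsRegular) (hθκ : θ < κ)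
    (hνθ : ν < θ.ord.cof) (c : Ordinal.{u} → Ordinal.{u} → Ordinal.{u})
    (hcθ : ∀ α β, α < β → β < κ.ord → c α β < θ.ord) :
    ∃ δ < θ.ord, ∃ B ⊆ Iio κ.ord, (∀ α < κ.ord, ∃ β ∈ B, α ≤ β) ∧
      ∀ η < ν.ord, ∀ β ∈ B, c η β < δ := by
  have hνκ : ν.ord < κ.ord := ord_lt_ord.2 ((hνθ.trans_le (cof_ord_le θ)).trans hθκ)
  let bound β := ⨆ η : Iio ν.ord, c η β + 1
  have hbound : ∀ β, ν.ord ≤ β → β < κ.ord → bound β < θ.ord := fun β hνβ hβ =>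
    lift_iSup_add_one_lt_of_lt_cof (lift_mk_Iio_lt_cof_lift (by rwa [card_ord]))
      fun η => hcθ η β (η.2.trans_le hνβ) hβ
  obtain ⟨δ, hδ, hfiber⟩ := exists_cofinal_fiber hκ hνκ (by rwa [card_ord]) hbound
  refine ⟨δ, hδ, {β | β < κ.ord ∧ ν.ord ≤ β ∧ bound β = δ}, fun β hβ => hβ.1, fun α hα => ?_, ?_⟩
  · obtain ⟨β, hβ, hνβ, hαβ, hβδ⟩ := hfiber α hα
    exact ⟨β, ⟨hβ, hνβ, hβδ⟩, hαβ⟩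
  · rintro η hη β ⟨-, -, rfl⟩
    exact (lt_add_one _).trans_le (Ordinal.le_iSup (fun η : Iio ν.ord => c η β + 1) ⟨η, hη⟩)

end Ordinal

theorem stmt_0_general (κ ν θ : Cardinal)
    (hκreg : κ.IsRegular)
    (c : Ordinal → Ordinal → Ordinal)
    (hcθ : ∀ α β : Ordinal, α < β → β < κ.ord → c α β < θ.ord)
    (hcreg : ∀ α β : Ordinal, α < β → β < κ.ord → c α β < β)
    (hwit : ∀ B : Set Ordinal, B ⊆ Set.Iio κ.ord →
      (∀ α < κ.ord, ∃ β ∈ B, α ≤ β) →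
      ∃ η < ν.ord, otp {x : Ordinal | ∃ β ∈ B, η < β ∧ c η β = x} =
        Ordinal.lift.{1} θ.ord) :
    θ ≤ κ ∧ (ν < (θ.ord).cof → θ = κ) := by
  have hθκ : θ ≤ κ := by
    obtain ⟨η, -, hotp⟩ := hwit (Iio κ.ord) subset_rfl fun α hα => ⟨α, hα, le_rfl⟩
    rw [← ord_le_ord, ← Ordinal.lift_le.{1}, ← hotp]
    exact otp_le_lift_of_subset_Iio fun _ ⟨β, hβ, hηβ, hx⟩ => hx ▸ (hcreg η β hηβ hβ).trans hβ
  refine ⟨hθκ, fun hcf => ?_⟩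
  by_contra hne
  obtain ⟨δ, hδ, B, hBκ, hBcof, hBδ⟩ :=
    exists_cofinal_colors_lt hκreg (hθκ.lt_of_ne hne) hcf c hcθ
  obtain ⟨η, hη, hotp⟩ := hwit B hBκ hBcof
  have hotp_le : otp {x | ∃ β ∈ B, η < β ∧ c η β = x} ≤ Ordinal.lift.{1} δ :=
    otp_le_lift_of_subset_Iio fun _ ⟨β, hβ, _, hx⟩ => hx ▸ hBδ η hη β hβ
  rw [hotp, Ordinal.lift_le] at hotp_le
  exact hotp_le.not_gt hδ

theorem stmt_0 (κ ν θ : Cardinal)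
    (hκreg : κ.IsRegular) (hκunc : ℵ₀ < κ)
    (hν : ℵ₀ ≤ ν) (hνκ : ν ≤ κ) (hθ : 2 ≤ θ)
    (c : Ordinal → Ordinal → Ordinal)
    (hcθ : ∀ α β : Ordinal, α < β → β < κ.ord → c α β < θ.ord)
    (hcreg : ∀ α β : Ordinal, α < β → β < κ.ord → c α β < β)
    (hwit : ∀ B : Set Ordinal, B ⊆ Set.Iio κ.ord →
      (∀ α < κ.ord, ∃ β ∈ B, α ≤ β) →
      ∃ η < ν.ord, otp {x : Ordinal | ∃ β ∈ B, η < β ∧ c η β = x} =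
        Ordinal.lift.{1} θ.ord) :
    θ ≤ κ ∧ (ν < (θ.ord).cof → θ = κ) :=
  stmt_0_general κ ν θ hκreg c hcθ hcreg hwit
end

section
/- Suppose κ is a regular uncountable cardinal and there is an upper-regressive colouring c : [κ]² → θ such that for every cofinal B ⊆ κ there exists η < ν with otp(c[{η} ⊛ B]) = θ, where ν < κ is an infinite cardinal. Then cf(θ) ≤ ν⁺. -/
open Cardinal Ordinal Set

/-!
Suppose `cf θ > ν⁺`. Then `F β := sup {c(η, β) : η < min(ν, β)}` is below `θ` for every `β < κ`.
No level set `{β : F β ≤ ε}` with `ε < θ` can be cofinal in `κ`: the hypothesis applied to it gives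
colours of order type `θ` that are all `≤ ε`. So `F β > ε` for all `β ≥ G ε`, for some `G ε < κ`.
A point `β < κ` of cofinality `ν⁺` closed under `G` has `F β < β`, as `c` is regressive and
`cf β > ν`; hence `G (F β) < β` and so `F β > F β`.
-/

theorem otp_mono {S T : Set Ordinal.{0}} (h : S ⊆ T) : otp S ≤ otp T :=
  (@type_le_iff' _ _ _ _
    (RelEmbedding.isWellOrder (Subrel.relEmbedding (fun a b : Ordinal.{0} => a < b) S))
    (RelEmbedding.isWellOrder (Subrel.relEmbedding (fun a b : Ordinal.{0} => a < b) T))).2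
    ⟨⟨⟨inclusion h, inclusion_injective h⟩, Iff.rfl⟩⟩

theorem otp_Iio (o : Ordinal.{0}) : otp (Iio o) = Ordinal.lift.{1} o :=
  (type_subrel _ _).trans (typein_ordinal o)

namespace Ordinal

theorem iSup_Iio_lt_of_card_lt_cof {a o : Ordinal.{u}} {f : Iio a → Ordinal.{u}}
    (ha : a.card < o.cof) (hf : ∀ i, f i < o) : ⨆ i, f i < o :=
  lift_iSup_lt_of_lt_cof
    (by rwa [Cardinal.mk_Iio_ordinal, Cardinal.lift_lift, ← lift_cof, Cardinal.lift_lt]) hf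

noncomputable def iterSup (q : Ordinal.{u} → Ordinal.{u}) (i : Ordinal.{u}) : Ordinal.{u} :=
  ⨆ j : Iio i, q (iterSup q j)
termination_by i
decreasing_by exact j.2

section iterSup

variable {q : Ordinal.{u} → Ordinal.{u}}

theorem iterSup_eq (q : Ordinal.{u} → Ordinal.{u}) (i : Ordinal.{u}) :
    iterSup q i = ⨆ j : Iio i, q (iterSup q j) := by
  rw [iterSup]

theorem le_iterSup {i j : Ordinal.{u}} (h : j < i) : q (iterSup q j) ≤ iterSup q i := by
  rw [iterSup_eq q i]
  exact Ordinal.le_iSup (fun j : Iio i => q (iterSup q j)) ⟨j, h⟩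

theorem iterSup_lt_ord {κ : Cardinal.{u}} (hκ : κ.IsRegular) (hq : MapsTo q (Iio κ.ord) (Iio κ.ord))
    {i : Ordinal.{u}} (hi : i.card < κ) : iterSup q i < κ.ord := by
  induction i using WellFoundedLT.induction with
  | _ i ih =>
    rw [iterSup_eq]
    refine iSup_Iio_lt_of_card_lt_cof (by rwa [hκ.cof_ord]) fun ⟨j, hj⟩ => hq ?_
    exact ih j hj ((card_le_card hj.le).trans_lt hi)

end iterSup

theorem exists_cof_eq_mapsTo_Iio {κ μ : Cardinal.{u}} (hκ : κ.IsRegular) (hμ : μ.IsRegular)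
    (hμκ : μ < κ) {g : Ordinal.{u} → Ordinal.{u}} (hg : MapsTo g (Iio κ.ord) (Iio κ.ord)) :
    ∃ β < κ.ord, β.cof = μ ∧ MapsTo g (Iio β) (Iio β) := by
  set q : Ordinal → Ordinal := fun y => max (y + 1) (⨆ x : Iio y, g x + 1)
  have hq : ∀ y, y < q y := fun y => (lt_add_one y).trans_le (le_max_left _ _)
  have hqg : ∀ x y, x < y → g x < q y := fun x y h =>
    (lt_add_one _).trans_le <|
      (Ordinal.le_iSup (fun x : Iio y => g x + 1) ⟨x, h⟩).trans (le_max_right _ _)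
  have hqκ : MapsTo q (Iio κ.ord) (Iio κ.ord) := by
    have hlim := isSuccLimit_ord hκ.aleph0_le
    intro y (hy : y < κ.ord)
    refine max_lt (hlim.add_one_lt hy) (iSup_Iio_lt_of_card_lt_cof ?_ fun x => ?_)
    · rwa [hκ.cof_ord, ← lt_ord]
    · exact hlim.add_one_lt (hg (x.2.trans hy))
  have hμlim : Order.IsSuccLimit μ.ord := isSuccLimit_ord hμ.aleph0_le
  refine ⟨iterSup q μ.ord, iterSup_lt_ord hκ hqκ (by rwa [card_ord]), ?_, fun x hx => ?_⟩
  · rw [iterSup_eq, cof_iSup_Iio _ hμlim.isSuccPrelimit, hμ.cof_ord]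
    exact fun i j h => (le_iterSup h).trans_lt (hq _)
  · rw [mem_Iio, iterSup_eq] at hx
    obtain ⟨⟨j, hj⟩, hxj⟩ := Ordinal.lt_iSup_iff.1 hx
    calc g x < q (iterSup q (j + 1)) := hqg _ _ (hxj.trans_le (le_iterSup (lt_add_one j)))
      _ ≤ iterSup q μ.ord := le_iterSup (hμlim.add_one_lt hj)

end Ordinal

noncomputable def supColour (c : Ordinal.{u} → Ordinal.{u} → Ordinal.{u}) (ν β : Ordinal.{u}) :
    Ordinal.{u} :=
  ⨆ η : Iio ν, if η.1 < β then c η β else 0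

section supColour

variable {c : Ordinal.{u} → Ordinal.{u} → Ordinal.{u}} {ν β : Ordinal.{u}}

theorem le_supColour {η : Ordinal.{u}} (hη : η < ν) (hηβ : η < β) : c η β ≤ supColour c ν β := by
  simpa [supColour, hηβ] using Ordinal.le_iSup (fun η : Iio ν => if η.1 < β then c η β else 0) ⟨η, hη⟩

theorem supColour_lt {o : Ordinal.{u}} (hν : ν.card < o.cof) (ho : 0 < o)
    (hc : ∀ η < ν, η < β → c η β < o) : supColour c ν β < o :=
  iSup_Iio_lt_of_card_lt_cof hν fun η => by
    split_ifs with h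
    exacts [hc η η.2 h, ho]

end supColour

theorem exists_forall_ge_lt_supColour {c : Ordinal.{0} → Ordinal.{0} → Ordinal.{0}}
    {K ν θ ε : Ordinal.{0}} (hθ : Order.IsSuccLimit θ)
    (hwit : ∀ B : Set Ordinal, B ⊆ Iio K → (∀ α < K, ∃ β ∈ B, α ≤ β) →
      ∃ η < ν, otp {x : Ordinal | ∃ β ∈ B, η < β ∧ c η β = x} = Ordinal.lift.{1} θ)
    (hε : ε < θ) : ∃ γ < K, ∀ β, γ ≤ β → β < K → ε < supColour c ν β := by
  by_contra! hcof
  obtain ⟨η, hη, hotp⟩ := hwit {β | β < K ∧ supColour c ν β ≤ ε} (fun β hβ => hβ.1)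
    fun α hα => by
      obtain ⟨β, hαβ, hβ, hFβ⟩ := hcof α hα
      exact ⟨β, ⟨hβ, hFβ⟩, hαβ⟩
  have hsub : {x | ∃ β ∈ {β | β < K ∧ supColour c ν β ≤ ε}, η < β ∧ c η β = x} ⊆ Iio (ε + 1) := by
    rintro _ ⟨β, ⟨-, hFβ⟩, hηβ, rfl⟩
    exact Order.lt_add_one_iff.2 ((le_supColour hη hηβ).trans hFβ)
  have hθε := (otp_mono hsub).trans_eq (otp_Iio _)
  rw [hotp, Ordinal.lift_le] at hθε
  exact hθε.not_gt (hθ.add_one_lt hε)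

theorem stmt_1_general (κ ν θ : Cardinal)
    (hκreg : κ.IsRegular)
    (hν : ℵ₀ ≤ ν) (hθκ : θ ≤ κ)
    (c : Ordinal → Ordinal → Ordinal)
    (hcθ : ∀ α β : Ordinal, α < β → β < κ.ord → c α β < θ.ord)
    (hcreg : ∀ α β : Ordinal, α < β → β < κ.ord → c α β < β)
    (hwit : ∀ B : Set Ordinal, B ⊆ Set.Iio κ.ord →
      (∀ α < κ.ord, ∃ β ∈ B, α ≤ β) →
      ∃ η < ν.ord, otp {x : Ordinal | ∃ β ∈ B, η < β ∧ c η β = x} =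
        Ordinal.lift.{1} θ.ord) :
    (θ.ord).cof ≤ Order.succ ν := by
  by_contra! hθcof
  have hνθ : ν.ord.card < θ.ord.cof := by rw [card_ord]; exact (Order.lt_succ ν).trans hθcof
  have hθlim : Order.IsSuccLimit θ.ord :=
    one_lt_cof_iff.1 (aleph0_le_cof_iff.1 (hν.trans (card_ord ν ▸ hνθ.le)))
  have hFθ : ∀ β < κ.ord, supColour c ν.ord β < θ.ord := fun β hβ =>
    supColour_lt hνθ hθlim.bot_lt fun η _ hηβ => hcθ η β hηβ hβ
  choose! G hGκ hG using fun ε (hε : ε < θ.ord) => exists_forall_ge_lt_supColour hθlim hwit hε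
  have hsucc : Order.succ ν < κ :=
    hθcof.trans_le ((cof_le_card _).trans ((card_ord θ).trans_le hθκ))
  obtain ⟨β, hβκ, hβcof, hβG⟩ := exists_cof_eq_mapsTo_Iio hκreg (isRegular_succ hν) hsucc
    (g := fun ε => if ε < θ.ord then G ε else 0) fun ε _ => by
      simp only [mem_Iio]
      split_ifs with h
      exacts [hGκ ε h, hκreg.ord_pos]
  have hβpos : 0 < β := by
    rw [pos_iff_ne_zero]
    rintro rfl
    exact Cardinal.succ_ne_zero ν (hβcof.symm.trans cof_zero)
  have hFβ : supColour c ν.ord β < β :=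
    supColour_lt (by rw [card_ord, hβcof]; exact Order.lt_succ ν) hβpos
      fun η _ hηβ => hcreg η β hηβ hβκ
  have hGβ : G (supColour c ν.ord β) < β := by simpa [hFθ β hβκ] using hβG hFβ
  exact (hG _ (hFθ β hβκ) β hGβ.le hβκ).false

theorem stmt_1 (κ ν θ : Cardinal)
    (hκreg : κ.IsRegular) (hκunc : ℵ₀ < κ)
    (hν : ℵ₀ ≤ ν) (hνκ : ν < κ) (hθ : 2 ≤ θ) (hθκ : θ ≤ κ)
    (c : Ordinal → Ordinal → Ordinal)
    (hcθ : ∀ α β : Ordinal, α < β → β < κ.ord → c α β < θ.ord)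
    (hcreg : ∀ α β : Ordinal, α < β → β < κ.ord → c α β < β)
    (hwit : ∀ B : Set Ordinal, B ⊆ Set.Iio κ.ord →
      (∀ α < κ.ord, ∃ β ∈ B, α ≤ β) →
      ∃ η < ν.ord, otp {x : Ordinal | ∃ β ∈ B, η < β ∧ c η β = x} =
        Ordinal.lift.{1} θ.ord) :
    (θ.ord).cof ≤ Order.succ ν :=
  stmt_1_general κ ν θ hκreg hν hθκ c hcθ hcreg hwit
end

section
/- Let κ be an infinite cardinal with κ < 𝔱 (the tower number) and cf(κ) = ω. Then for every colouring c : [κ]² → ω there exists a cofinal subset B ⊆ κ such that for every η < κ, c[{η} ⊛ B] ≠ ω, i.e., c restricted to pairs with first coordinate η omits some colour on B. -/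
/-!
Fix a monotone cofinal sequence `γ : ℕ → κ` (it exists because `cf κ = ω`) and look for `B = γ[A]`
with `A ⊆ ℕ` infinite: such a `B` is cofinal, and it omits a colour at `η` as soon as
`n ↦ c(η, γ n)` omits infinitely many values on `A`. By recursion on `η ≤ κ` choose a
`⊆*`-decreasing sequence of infinite sets `A_η` such that `c(η, γ ·)` omits infinitely many values
on `A_η`: at stage `η` the earlier sets have an infinite pseudo-intersection because `|η| < 𝔱`, and
any infinite set shrinks to one on which the colouring takes only even or only odd values. The last
set `A_κ` works for every `η < κ`, being almost contained in `A_η`.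
-/

open Cardinal Ordinal Set

/-- The tower number 𝔱: the least length (in cardinality) of a `⊆*`-decreasing sequence of
infinite subsets of ω with no infinite pseudo-intersection. -/
noncomputable def towerNumber : Cardinal :=
  sInf { c : Cardinal | ∃ o : Ordinal, o.card = c ∧
    ∃ T : Ordinal → Set ℕ,
      (∀ i < o, (T i).Infinite) ∧
      (∀ i j : Ordinal, i < j → j < o → (T j \ T i).Finite) ∧
      ¬ ∃ X : Set ℕ, X.Infinite ∧ ∀ i < o, (X \ T i).Finite }

theorem exists_infinite_pseudoIntersection_of_card_lt_towerNumber {o : Ordinal}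
    (ho : o.card < towerNumber) {T : Ordinal → Set ℕ} (hT : ∀ i < o, (T i).Infinite)
    (hdec : ∀ i j : Ordinal, i < j → j < o → (T j \ T i).Finite) :
    ∃ X : Set ℕ, X.Infinite ∧ ∀ i < o, (X \ T i).Finite := by
  by_contra h
  have : towerNumber ≤ o.card := csInf_le' ⟨o, rfl, T, hT, hdec, h⟩
  exact this.not_gt ho

theorem exists_infinite_subset_infinite_compl_image {α : Type*} (f : α → ℕ) {P : Set α}
    (hP : P.Infinite) : ∃ A ⊆ P, A.Infinite ∧ (f '' A)ᶜ.Infinite := by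
  set S : Set ℕ := {n | Even n}
  have hS : S.Infinite :=
    infinite_of_forall_exists_gt fun n => ⟨2 * n + 2, ⟨n + 1, by ring⟩, by omega⟩
  have hSc : Sᶜ.Infinite :=
    infinite_of_forall_exists_gt fun n => ⟨2 * n + 1, by simp [S], by omega⟩
  by_cases hPS : (P ∩ f ⁻¹' S).Infinite
  · refine ⟨_, inter_subset_left, hPS, hSc.mono ?_⟩
    exact compl_subset_compl.2 (image_subset_iff.2 inter_subset_right)
  · have hPSc : (P ∩ f ⁻¹' Sᶜ).Infinite := by
      rw [← inter_union_compl P (f ⁻¹' S)] at hP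
      exact (infinite_union.1 hP).resolve_left hPS
    refine ⟨_, inter_subset_left, hPSc, hS.mono ?_⟩
    exact subset_compl_comm.1 (image_subset_iff.2 inter_subset_right)

theorem Set.Infinite.compl_image_of_finite_sdiff {α β : Type*} {f : α → β} {X Y : Set α}
    (hY : (f '' Y)ᶜ.Infinite) (hXY : (X \ Y).Finite) : (f '' X)ᶜ.Infinite := by
  refine (hY.sdiff (hXY.image f)).mono ?_
  rintro b ⟨hbY, hbXY⟩ ⟨a, ha, rfl⟩
  by_cases haY : a ∈ Y
  · exact hbY ⟨a, haY, rfl⟩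
  · exact hbXY ⟨a, ⟨ha, haY⟩, rfl⟩

noncomputable def omittingTower (f : Ordinal → ℕ → ℕ) (i : Ordinal) : Set ℕ :=
  Classical.epsilon fun A : Set ℕ =>
    A.Infinite ∧ (∀ j < i, (A \ omittingTower f j).Finite) ∧ (f i '' A)ᶜ.Infinite
termination_by i

theorem omittingTower_spec (f : Ordinal → ℕ → ℕ) (i : Ordinal) (hi : i.card < towerNumber) :
    (omittingTower f i).Infinite ∧
      (∀ j < i, (omittingTower f i \ omittingTower f j).Finite) ∧
      (f i '' omittingTower f i)ᶜ.Infinite := by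
  induction i using WellFoundedLT.induction with
  | _ i IH =>
  have hcard : ∀ j < i, j.card < towerNumber := fun j hj => (card_le_card hj.le).trans_lt hi
  obtain ⟨X, hX, hXT⟩ := exists_infinite_pseudoIntersection_of_card_lt_towerNumber hi
    (fun j hj => (IH j hj (hcard j hj)).1)
    (fun j k hjk hk => (IH k hk (hcard k hk)).2.1 j hjk)
  obtain ⟨A, hAX, hA, hfA⟩ := exists_infinite_subset_infinite_compl_image (f i) hX
  have hex : ∃ A : Set ℕ,
      A.Infinite ∧ (∀ j < i, (A \ omittingTower f j).Finite) ∧ (f i '' A)ᶜ.Infinite :=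
    ⟨A, hA, fun j hj => (hXT j hj).subset (sdiff_subset_sdiff_left hAX), hfA⟩
  rw [omittingTower]
  exact Classical.epsilon_spec hex

theorem exists_infinite_forall_infinite_compl_image {o : Ordinal} (ho : o.card < towerNumber)
    (f : Ordinal → ℕ → ℕ) : ∃ A : Set ℕ, A.Infinite ∧ ∀ i < o, (f i '' A)ᶜ.Infinite := by
  obtain ⟨hA, hAT, -⟩ := omittingTower_spec f o ho
  refine ⟨omittingTower f o, hA, fun i hi => ?_⟩
  exact (omittingTower_spec f i ((card_le_card hi.le).trans_lt ho)).2.2.compl_image_of_finite_sdiff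
    (hAT i hi)

theorem Order.exists_monotone_isCofinal_range_of_cof_eq_aleph0 {α : Type*} [LinearOrder α]
    (h : Order.cof α = ℵ₀) : ∃ γ : ℕ → α, Monotone γ ∧ IsCofinal (range γ) := by
  obtain ⟨s, hs, hcard⟩ := Order.exists_cof_eq α
  rw [h] at hcard
  have : Countable s := mk_le_aleph0_iff.1 hcard.le
  have : Nonempty s := mk_ne_zero_iff.1 (by rw [hcard]; exact aleph0_ne_zero)
  obtain ⟨e, he⟩ := exists_surjective_nat s
  refine ⟨partialSups fun n => (e n : α), (partialSups _).monotone, fun x => ?_⟩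
  obtain ⟨y, hy, hxy⟩ := hs x
  obtain ⟨n, hn⟩ := he ⟨y, hy⟩
  refine ⟨_, mem_range_self n, hxy.trans ?_⟩
  rw [show y = e n by simp [hn]]
  exact le_partialSups (fun n => (e n : α)) n

theorem stmt_3_general (κ : Cardinal) (hlt : κ < towerNumber)
    (hcf : (κ.ord).cof = ℵ₀)
    (c : Ordinal → Ordinal → ℕ) :
    ∃ B : Set Ordinal, B ⊆ Set.Iio κ.ord ∧ (∀ α < κ.ord, ∃ β ∈ B, α ≤ β) ∧
      ∀ η < κ.ord, {n : ℕ | ∃ β ∈ B, η < β ∧ c η β = n} ≠ Set.univ := by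
  have hcof : Order.cof (Iio κ.ord) = ℵ₀ := by
    rw [cof_Iio, ← lift_cof, hcf, lift_aleph0]
  obtain ⟨γ, hγ, hγcof⟩ := Order.exists_monotone_isCofinal_range_of_cof_eq_aleph0 hcof
  obtain ⟨A, hA, hAomit⟩ := exists_infinite_forall_infinite_compl_image (o := κ.ord)
    (by rwa [card_ord]) fun η n => c η (γ n)
  refine ⟨(fun n => (γ n : Ordinal)) '' A, ?_, fun α hα => ?_, fun η hη => ?_⟩
  · rintro _ ⟨n, -, rfl⟩
    exact (γ n).2
  · obtain ⟨_, ⟨n, rfl⟩, hn⟩ := hγcof ⟨α, hα⟩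
    obtain ⟨m, hm, hnm⟩ := hA.exists_gt n
    exact ⟨γ m, mem_image_of_mem _ hm, hn.trans (hγ hnm.le)⟩
  · obtain ⟨k, hk⟩ := (hAomit η hη).nonempty
    refine (ne_univ_iff_exists_notMem _).2 ⟨k, ?_⟩
    rintro ⟨_, ⟨n, hn, rfl⟩, -, rfl⟩
    exact hk ⟨n, hn, rfl⟩

theorem stmt_3 (κ : Cardinal) (hκ : ℵ₀ ≤ κ) (hlt : κ < towerNumber)
    (hcf : (κ.ord).cof = ℵ₀)
    (c : Ordinal → Ordinal → ℕ) :
    ∃ B : Set Ordinal, B ⊆ Set.Iio κ.ord ∧ (∀ α < κ.ord, ∃ β ∈ B, α ≤ β) ∧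
      ∀ η < κ.ord, {n : ℕ | ∃ β ∈ B, η < β ∧ c η β = n} ≠ Set.univ :=
  stmt_3_general κ hlt hcf c
end

section
/- Suppose c : [κ]² → θ is a colouring of a regular uncountable cardinal κ such that for every B ∈ [κ]^κ, c''[B]² = θ (i.e., c witnesses κ ↛ [κ]²_θ). Then for every B ∈ [κ]^κ there exists ε < κ such that for all β ∈ B \ ε and all τ < min{ε, θ}, there exists η ∈ B ∩ ε with c(η,β) = τ. -/
open Cardinal Ordinal Set

/-!
Fix a colour τ < θ and run through B greedily, keeping β exactly when no previously kept η has
c(η, β) = τ. The kept set G ⊆ B realizes no pair of colour τ, so |G| < κ, and by regularity G is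
bounded by some ε_τ < κ. Every β ∈ B above ε_τ was rejected, i.e. c(η, β) = τ for some kept
η < ε_τ. An ε < κ closed under τ ↦ ε_τ (the limit of an ω-iteration of suprema, below κ since
cf κ > ω) then works for all colours τ < min(ε, θ) at once.
-/

section GreedyFree

variable {α : Type*} [Preorder α] [WellFoundedLT α]

def greedyFree (R : α → α → Prop) (B : Set α) : Set α :=
  {β | WellFoundedLT.fix (motive := fun _ => Prop)
    (fun β ih => β ∈ B ∧ ∀ η (h : η < β), ih η h → ¬ R η β) β}

variable {R : α → α → Prop} {B : Set α}

theorem mem_greedyFree {β : α} :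
    β ∈ greedyFree R B ↔ β ∈ B ∧ ∀ η ∈ greedyFree R B, η < β → ¬ R η β := by
  simp only [greedyFree, mem_ofPred_eq]
  rw [WellFoundedLT.fix_eq]
  grind

theorem greedyFree_subset : greedyFree R B ⊆ B := fun _ hβ => (mem_greedyFree.1 hβ).1

theorem not_rel_of_mem_greedyFree {η β : α} (hη : η ∈ greedyFree R B)
    (hβ : β ∈ greedyFree R B) (hηβ : η < β) : ¬ R η β :=
  (mem_greedyFree.1 hβ).2 η hη hηβ

theorem exists_rel_of_not_mem_greedyFree {β : α} (hβB : β ∈ B) (hβ : β ∉ greedyFree R B) :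
    ∃ η ∈ greedyFree R B, η < β ∧ R η β := by
  by_contra! h
  exact hβ (mem_greedyFree.2 ⟨hβB, h⟩)

end GreedyFree

namespace Cardinal.IsRegular

variable {κ : Cardinal.{u}}

theorem exists_lt_ord_forall_lt (hκ : κ.IsRegular) {S : Set Ordinal.{u}} (hS : S ⊆ Iio κ.ord)
    (hSκ : #S < Cardinal.lift.{u + 1} κ) : ∃ ε < κ.ord, ∀ η ∈ S, η < ε := by
  refine ⟨sSup ((· + 1) '' S), sSup_add_one_lt_of_lt_cof ?_ hS, fun η hη => ?_⟩
  · rwa [← lift_cof, hκ.cof_ord]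
  · refine Order.add_one_le_iff.1 (le_csSup ?_ (mem_image_of_mem _ hη))
    exact ⟨κ.ord, forall_mem_image.2 fun ξ hξ => Order.add_one_le_of_lt (hS hξ)⟩

theorem exists_lt_ord_forall_le_exists_rel (hκ : κ.IsRegular)
    {R : Ordinal.{u} → Ordinal.{u} → Prop} {B : Set Ordinal.{u}} (hB : B ⊆ Iio κ.ord)
    (hR : ∀ S ⊆ B, #S = Cardinal.lift.{u + 1} κ → ∃ η ∈ S, ∃ β ∈ S, η < β ∧ R η β) :
    ∃ ε < κ.ord, ∀ β ∈ B, ε ≤ β → ∃ η ∈ B, η < ε ∧ R η β := by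
  set G := greedyFree R B
  have hG : #G < Cardinal.lift.{u + 1} κ := by
    refine lt_of_le_of_ne ?_ fun h => ?_
    · calc #G ≤ #(Iio κ.ord) := mk_le_mk_of_subset (greedyFree_subset.trans hB)
        _ = Cardinal.lift.{u + 1} κ := by rw [mk_Iio_ordinal, card_ord]
    · obtain ⟨η, hη, β, hβ, hηβ, hR⟩ := hR G greedyFree_subset h
      exact not_rel_of_mem_greedyFree hη hβ hηβ hR
  obtain ⟨ε, hε, hGε⟩ := hκ.exists_lt_ord_forall_lt (greedyFree_subset.trans hB) hG
  refine ⟨ε, hε, fun β hβ hεβ => ?_⟩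
  obtain ⟨η, hη, -, hR⟩ := exists_rel_of_not_mem_greedyFree hβ fun hβG => (hGε β hβG).not_ge hεβ
  exact ⟨η, greedyFree_subset hη, hGε η hη, hR⟩

theorem exists_lt_ord_forall_lt_map_le (hκ : κ.IsRegular) (hκ₀ : ℵ₀ < κ)
    {g : Ordinal.{u} → Ordinal.{u}} (hg : ∀ τ < κ.ord, g τ < κ.ord) :
    ∃ ε < κ.ord, ∀ τ < ε, g τ ≤ ε := by
  set F : Ordinal.{u} → Ordinal.{u} := fun x => sSup (g '' Iio x)
  have hF : ∀ x < κ.ord, F x < κ.ord := by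
    intro x hx
    refine sSup_lt_of_lt_cof ?_ (forall_mem_image.2 fun τ hτ => hg τ (lt_trans hτ hx))
    calc #(g '' Iio x) ≤ #(Iio x) := mk_image_le
      _ = Cardinal.lift.{u + 1} x.card := mk_Iio_ordinal x
      _ < (Ordinal.lift.{u + 1} κ.ord).cof := by
        rw [← lift_cof, hκ.cof_ord, Cardinal.lift_lt]; exact lt_ord.1 hx
  have hgF : ∀ x, ∀ τ < x, g τ ≤ F x := fun x τ hτ =>
    le_csSup (Ordinal.bddAbove_image bddAbove_Iio g) (mem_image_of_mem g hτ)
  have hF0 : 0 < κ.ord := Cardinal.ord_pos.2 (aleph0_pos.trans hκ₀)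
  refine ⟨nfp F 0, nfp_lt_ord_of_isRegular hκ hκ₀.ne' hF hF0, fun τ hτ => ?_⟩
  obtain ⟨n, hn⟩ := lt_nfp_iff.1 hτ
  calc g τ ≤ F (F^[n] 0) := hgF _ τ hn
    _ = F^[n + 1] 0 := (Function.iterate_succ_apply' F n 0).symm
    _ ≤ nfp F 0 := iterate_le_nfp F 0 (n + 1)

end Cardinal.IsRegular

theorem stmt_4_general (κ θ : Cardinal.{0}) (hκreg : κ.IsRegular) (hκunc : ℵ₀ < κ)
    (c : Ordinal.{0} → Ordinal.{0} → Ordinal.{0})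
    (hwit : ∀ B : Set Ordinal, B ⊆ Set.Iio κ.ord →
      Cardinal.mk ↥B = Cardinal.lift.{1} κ →
      ∀ τ < θ.ord, ∃ η ∈ B, ∃ β ∈ B, η < β ∧ c η β = τ)
    (B : Set Ordinal) (hB : B ⊆ Set.Iio κ.ord) :
    ∃ ε < κ.ord, ∀ β ∈ B, ε ≤ β → ∀ τ : Ordinal, τ < ε → τ < θ.ord →
      ∃ η ∈ B, η < ε ∧ c η β = τ := by
  have hcolour : ∀ τ, ∃ ε < κ.ord, τ < θ.ord →
      ∀ β ∈ B, ε ≤ β → ∃ η ∈ B, η < ε ∧ c η β = τ := by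
    intro τ
    by_cases hτ : τ < θ.ord
    · obtain ⟨ε, hε, h⟩ :=
        hκreg.exists_lt_ord_forall_le_exists_rel (R := fun η β => c η β = τ) hB
          fun S hSB hS => hwit S (hSB.trans hB) hS τ hτ
      exact ⟨ε, hε, fun _ => h⟩
    · exact ⟨0, hκreg.ord_pos, (absurd · hτ)⟩
  choose g hg_lt hg using hcolour
  obtain ⟨ε, hε, hclosed⟩ := hκreg.exists_lt_ord_forall_lt_map_le hκunc fun τ _ => hg_lt τ
  refine ⟨ε, hε, fun β hβ hεβ τ hτε hτθ => ?_⟩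
  obtain ⟨η, hη, hηg, hc⟩ := hg τ hτθ β hβ ((hclosed τ hτε).trans hεβ)
  exact ⟨η, hη, hηg.trans_le (hclosed τ hτε), hc⟩

theorem stmt_4 (κ θ : Cardinal.{0}) (hκreg : κ.IsRegular) (hκunc : ℵ₀ < κ)
    (c : Ordinal.{0} → Ordinal.{0} → Ordinal.{0})
    (hcθ : ∀ α β : Ordinal, α < β → β < κ.ord → c α β < θ.ord)
    (hwit : ∀ B : Set Ordinal, B ⊆ Set.Iio κ.ord →
      Cardinal.mk ↥B = Cardinal.lift.{1} κ →
      ∀ τ < θ.ord, ∃ η ∈ B, ∃ β ∈ B, η < β ∧ c η β = τ)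
    (B : Set Ordinal) (hB : B ⊆ Set.Iio κ.ord)
    (hBκ : Cardinal.mk ↥B = Cardinal.lift.{1} κ) :
    ∃ ε < κ.ord, ∀ β ∈ B, ε ≤ β → ∀ τ : Ordinal, τ < ε → τ < θ.ord →
      ∃ η ∈ B, η < ε ∧ c η β = τ :=
  stmt_4_general κ θ hκreg hκunc c hwit B hB
end

section
/- Suppose c : [κ]² → θ is a colouring of a regular uncountable cardinal κ such that for all A, B ∈ [κ]^κ, c[A ⊛ B] = θ (i.e., c witnesses κ ↛ [κ;κ]²_θ). Then for every A ∈ [κ]^κ there exists ε < κ such that for all β ∈ κ \ ε and all τ < min{ε, θ}, there exists η ∈ A ∩ ε with c(η,β) = τ. -/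
open Cardinal Ordinal Set

/-- Auxiliary: for a single colour `τ < θ.ord`, there is `ε < κ.ord` such that every
`β ∈ [ε, κ.ord)` has a witness `η ∈ A ∩ ε` with `c η β = τ`. -/
theorem stmt_5_aux (κ θ : Cardinal.{0}) (hκreg : κ.IsRegular)
    (c : Ordinal.{0} → Ordinal.{0} → Ordinal.{0})
    (hwit : ∀ A B : Set Ordinal, A ⊆ Set.Iio κ.ord → B ⊆ Set.Iio κ.ord →
      Cardinal.mk ↥A = Cardinal.lift.{1} κ → Cardinal.mk ↥B = Cardinal.lift.{1} κ →
      ∀ τ < θ.ord, ∃ η ∈ A, ∃ β ∈ B, η < β ∧ c η β = τ)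
    (A : Set Ordinal) (hA : A ⊆ Set.Iio κ.ord)
    (hAκ : Cardinal.mk ↥A = Cardinal.lift.{1} κ)
    (hub : ∀ δ < κ.ord, ∃ α ∈ A, δ < α)
    (τ : Ordinal) (hτ : τ < θ.ord) :
    ∃ ε < κ.ord, ∀ β : Ordinal, ε ≤ β → β < κ.ord →
      ∃ η ∈ A, η < ε ∧ c η β = τ := by
  by_contra hcon
  push_neg at hcon
  -- hcon : ∀ ε < κ.ord, ∃ β, ε ≤ β ∧ β < κ.ord ∧ ∀ η ∈ A, η < ε → c η β ≠ τ
  have hAne : A.Nonempty := by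
    rw [← Set.nonempty_coe_sort, ← Cardinal.mk_ne_zero_iff, hAκ]
    simp only [ne_eq, Cardinal.lift_eq_zero]
    exact hκreg.pos.ne'
  obtain ⟨a₀, ha₀⟩ := hAne
  -- choice of a "bad" β above ε
  classical
  let βf : Ordinal → Ordinal := fun ε =>
    if h : ε < κ.ord then (hcon ε h).choose else 0
  have hβf : ∀ ε (h : ε < κ.ord), ε ≤ βf ε ∧ βf ε < κ.ord ∧
      ∀ η ∈ A, η < ε → c η (βf ε) ≠ τ := by
    intro ε h
    have := (hcon ε h).choose_spec
    simpa only [βf, dif_pos h] using this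
  -- choice of an element of A above δ
  let αf : Ordinal → Ordinal := fun δ =>
    if h : δ < κ.ord then (hub δ h).choose else a₀
  have hαfA : ∀ δ, αf δ ∈ A := by
    intro δ
    by_cases h : δ < κ.ord
    · simpa only [αf, dif_pos h] using (hub δ h).choose_spec.1
    · simpa only [αf, dif_neg h] using ha₀
  have hαflt : ∀ δ (h : δ < κ.ord), δ < αf δ := by
    intro δ h
    simpa only [αf, dif_pos h] using (hub δ h).choose_spec.2
  -- recursive construction
  let G : Ordinal → Ordinal :=
    Ordinal.lt_wf.fix (fun j ih => αf (βf (Ordinal.blsub j ih)))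
  have hGeq : ∀ j, G j = αf (βf (Ordinal.blsub j (fun i _ => G i))) := by
    intro j
    exact Ordinal.lt_wf.fix_eq _ j
  set ε : Ordinal → Ordinal := fun j => Ordinal.blsub j (fun i _ => G i) with hε
  set β : Ordinal → Ordinal := fun j => βf (ε j) with hβ
  have hGA : ∀ j, G j ∈ A := by
    intro j
    rw [hGeq j]
    exact hαfA _
  have hGκ : ∀ j, G j < κ.ord := fun j => hA (hGA j)
  have hεκ : ∀ j, j < κ.ord → ε j < κ.ord := by
    intro j hj
    exact Cardinal.blsub_lt_ord_of_isRegular hκreg (Cardinal.lt_ord.mp hj)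
      (fun i _ => hGκ i)
  have hβspec : ∀ j, j < κ.ord → ε j ≤ β j ∧ β j < κ.ord ∧
      ∀ η ∈ A, η < ε j → c η (β j) ≠ τ := fun j hj => hβf (ε j) (hεκ j hj)
  have hβG : ∀ j, j < κ.ord → β j < G j := by
    intro j hj
    rw [hGeq j]
    exact hαflt _ (hβspec j hj).2.1
  have hlt : ∀ i j, i < j → G i < ε j := by
    intro i j hij
    exact Ordinal.lt_blsub (fun i _ => G i) i hij
  -- strict monotonicity
  have hGmono : ∀ i j, i < j → j < κ.ord → G i < G j := by
    intro i j hij hj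
    exact lt_of_lt_of_le (hlt i j hij) (le_trans (hβspec j hj).1 (hβG j hj).le)
  have hβmono : ∀ i j, i < j → i < κ.ord → j < κ.ord → β i < β j := by
    intro i j hij hi hj
    exact lt_of_lt_of_le (lt_trans (hβG i hi) (hlt i j hij)) (hβspec j hj).1
  -- the two sets
  have hmkIio : Cardinal.mk ↥(Set.Iio κ.ord) = Cardinal.lift.{1} κ := by
    rw [Ordinal.mk_Iio_ordinal, Cardinal.card_ord]
  have hGinj : Set.InjOn G (Set.Iio κ.ord) := by
    intro i hi j hj hij
    by_contra hne
    rcases lt_or_gt_of_ne hne with h | h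
    · exact absurd hij (hGmono i j h hj).ne
    · exact absurd hij.symm (hGmono j i h hi).ne
  have hβinj : Set.InjOn β (Set.Iio κ.ord) := by
    intro i hi j hj hij
    by_contra hne
    rcases lt_or_gt_of_ne hne with h | h
    · exact absurd hij (hβmono i j h hi hj).ne
    · exact absurd hij.symm (hβmono j i h hj hi).ne
  have hGset : Cardinal.mk ↥(G '' (Set.Iio κ.ord)) = Cardinal.lift.{1} κ := by
    rw [Cardinal.mk_image_eq_of_injOn G _ hGinj, hmkIio]
  have hβset : Cardinal.mk ↥(β '' (Set.Iio κ.ord)) = Cardinal.lift.{1} κ := by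
    rw [Cardinal.mk_image_eq_of_injOn β _ hβinj, hmkIio]
  have hGsub : G '' (Set.Iio κ.ord) ⊆ Set.Iio κ.ord := by
    rintro _ ⟨i, _, rfl⟩; exact hGκ i
  have hβsub : β '' (Set.Iio κ.ord) ⊆ Set.Iio κ.ord := by
    rintro _ ⟨i, hi, rfl⟩; exact (hβspec i hi).2.1
  obtain ⟨η, hηA', b, hbB', hηb, hcηb⟩ :=
    hwit (G '' (Set.Iio κ.ord)) (β '' (Set.Iio κ.ord)) hGsub hβsub hGset hβset τ hτ
  obtain ⟨i, hi, rfl⟩ := hηA'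
  obtain ⟨j, hj, rfl⟩ := hbB'
  rcases lt_trichotomy i j with h | h | h
  · exact (hβspec j hj).2.2 (G i) (hGA i) (hlt i j h) hcηb
  · subst h
    exact absurd hηb (not_lt_of_gt (hβG i hi))
  · have hji : β j < G i :=
      lt_trans (hβG j hj) (lt_of_lt_of_le (hlt j i h)
        (le_trans (hβspec i hi).1 (hβG i hi).le))
    exact absurd hηb (not_lt_of_gt hji)

theorem stmt_5 (κ θ : Cardinal.{0}) (hκreg : κ.IsRegular) (hκunc : ℵ₀ < κ)
    (c : Ordinal.{0} → Ordinal.{0} → Ordinal.{0})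
    (hcθ : ∀ α β : Ordinal, α < β → β < κ.ord → c α β < θ.ord)
    (hwit : ∀ A B : Set Ordinal, A ⊆ Set.Iio κ.ord → B ⊆ Set.Iio κ.ord →
      Cardinal.mk ↥A = Cardinal.lift.{1} κ → Cardinal.mk ↥B = Cardinal.lift.{1} κ →
      ∀ τ < θ.ord, ∃ η ∈ A, ∃ β ∈ B, η < β ∧ c η β = τ)
    (A : Set Ordinal) (hA : A ⊆ Set.Iio κ.ord)
    (hAκ : Cardinal.mk ↥A = Cardinal.lift.{1} κ) :
    ∀ δ < κ.ord, ∃ ε, δ < ε ∧ ε < κ.ord ∧ ∀ β : Ordinal, ε ≤ β → β < κ.ord → ∀ τ : Ordinal, τ < ε → τ < θ.ord →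
      ∃ η ∈ A, η < ε ∧ c η β = τ := by
  classical
  have hκlim : Order.IsSuccLimit κ.ord := Cardinal.isSuccLimit_ord hκunc.le
  -- A is unbounded in κ.ord
  have hub : ∀ δ < κ.ord, ∃ α ∈ A, δ < α := by
    intro δ hδ
    by_contra hc
    push_neg at hc
    have hsub : A ⊆ Set.Iio (δ + 1) := by
      intro x hx
      exact lt_of_le_of_lt (hc x hx) (lt_add_one δ)
    have h1 : Cardinal.mk ↥A ≤ Cardinal.mk ↥(Set.Iio (δ + 1)) :=
      Cardinal.mk_le_mk_of_subset hsub
    rw [hAκ, Ordinal.mk_Iio_ordinal] at h1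
    have h2 : (δ + 1).card < κ := by
      apply Cardinal.lt_ord.mp
      rw [Ordinal.add_one_eq_succ]
      exact hκlim.succ_lt hδ
    exact absurd (Cardinal.lift_le.mp h1) (not_le_of_gt h2)
  -- for each colour τ < θ.ord choose a uniform bound
  let E : Ordinal → Ordinal := fun τ =>
    if h : τ < θ.ord then (stmt_5_aux κ θ hκreg c hwit A hA hAκ hub τ h).choose else 0
  have hE : ∀ τ (h : τ < θ.ord), E τ < κ.ord ∧ ∀ β : Ordinal, E τ ≤ β → β < κ.ord →
      ∃ η ∈ A, η < E τ ∧ c η β = τ := by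
    intro τ h
    have := (stmt_5_aux κ θ hκreg c hwit A hA hAκ hub τ h).choose_spec
    simpa only [E, dif_pos h] using this
  have hEκ : ∀ τ, E τ < κ.ord := by
    intro τ
    by_cases h : τ < θ.ord
    · exact (hE τ h).1
    · simp only [E, dif_neg h]
      exact hκlim.pos
  -- closure function
  let f : Ordinal → Ordinal := fun δ => Ordinal.blsub δ (fun t _ => E t)
  have hfκ : ∀ δ, δ < κ.ord → f δ < κ.ord := by
    intro δ hδ
    exact Cardinal.blsub_lt_ord_of_isRegular hκreg (Cardinal.lt_ord.mp hδ)
      (fun t _ => hEκ t)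
  have hfE : ∀ δ τ, τ < δ → E τ < f δ := by
    intro δ τ hτ
    exact Ordinal.lt_blsub (fun t _ => E t) τ hτ
  -- iterate ω many times
  intro δ hδ
  obtain ⟨e, he0, hes⟩ : ∃ e : ℕ → Ordinal, e 0 = δ + 1 ∧
      ∀ n, e (n + 1) = max (e n + 1) (f (e n)) :=
    ⟨fun n => Nat.rec (δ + 1) (fun _ ih => max (ih + 1) (f ih)) n, rfl, fun _ => rfl⟩
  have heκ : ∀ n, e n < κ.ord := by
    intro n
    induction n with
    | zero =>
      rw [he0, Ordinal.add_one_eq_succ]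
      exact hκlim.succ_lt hδ
    | succ n ih =>
      rw [hes n]
      apply max_lt
      · rw [Ordinal.add_one_eq_succ]
        exact hκlim.succ_lt ih
      · exact hfκ (e n) ih
  refine ⟨iSup e, ?_, ?_, ?_⟩
  · exact lt_of_lt_of_le (by rw [he0]; exact lt_add_one δ) (Ordinal.le_iSup e 0)
  · apply Cardinal.iSup_lt_ord_of_isRegular hκreg
    · rw [Cardinal.mk_nat]; exact hκunc
    · exact heκ
  · intro β hεβ hβκ τ hτε hτθ
    obtain ⟨n, hn⟩ := Ordinal.lt_iSup_iff.mp hτε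
    have hEτ : E τ < iSup e := by
      apply lt_of_lt_of_le (hfE (e n) τ hn)
      apply le_trans _ (Ordinal.le_iSup e (n + 1))
      rw [hes n]
      exact le_max_right _ _
    obtain ⟨η, hηA, hη, hc⟩ := (hE τ hτθ).2 β (le_trans hEτ.le hεβ) hβκ
    exact ⟨η, hηA, lt_trans hη hEτ, hc⟩
end

section
/- Let κ be a regular uncountable cardinal and let C⃗ = ⟨C_γ : γ ∈ S⟩ be a C-sequence over S ⊆ κ. If C⃗ is strongly amenable in κ, then for every club D ⊆ κ there are club-many δ < κ such that sup((D ∩ δ) \ C_γ) = δ for every γ ∈ S; and conversely, the latter property implies strong amenability. -/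
/-!
For the converse, a positive `δ` at which every `D \ C γ` accumulates bounds each `γ ∈ S` with
`D ∩ γ ⊆ C γ`: some point of `D \ C γ` below `δ` must lie above `γ`.

For the forward direction, the set of such `δ` is always closed. If it were bounded, every large
limit point `δ` of `D` would come with `γ ∈ S` and `α < δ` such that `D ∩ (α, δ) ⊆ C γ`, which
forces `δ ≤ γ`. Pressing down gives a single `α'` bounding `α` for unboundedly many `δ`. The club
`D'` of points of `D` above `α'` closed under `δ ↦ γ` then satisfies `D' ∩ γ ⊆ C γ` (at `δ` itself
by closedness of `C γ`), so strong amenability bounds these `γ ≥ δ`: a contradiction.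
-/

open Cardinal Ordinal Set Order

universe u

def AccumulatesAt (D : Set Ordinal) (δ : Ordinal) : Prop :=
  ∀ α < δ, ∃ β ∈ D, α < β ∧ β < δ

def IsClosedIn (o : Ordinal) (D : Set Ordinal) : Prop :=
  ∀ δ < o, IsSuccLimit δ → AccumulatesAt D δ → δ ∈ D

structure IsClubIn (o : Ordinal) (D : Set Ordinal) : Prop where
  subset_Iio : D ⊆ Iio o
  unbounded : ∀ α < o, ∃ β ∈ D, α ≤ β
  isClosedIn : IsClosedIn o D

def IsStronglyAmenable (o : Ordinal) (S : Set Ordinal) (C : Ordinal → Set Ordinal) : Prop :=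
  ∀ D, IsClubIn o D → ∃ ε < o, ∀ β ∈ S, D ∩ Iio β ⊆ C β → β ≤ ε

/-- The `δ < o` with `sup ((D ∩ δ) \ C γ) = δ` for all `γ ∈ S`. -/
def accPtsOfDiffs (o : Ordinal) (D S : Set Ordinal) (C : Ordinal → Set Ordinal) :
    Set Ordinal :=
  {δ | δ < o ∧ ∀ γ ∈ S, AccumulatesAt (D \ C γ) δ}

namespace AccumulatesAt

variable {D E c : Set Ordinal} {γ δ : Ordinal}

theorem isSuccLimit (hD : AccumulatesAt D δ) (hδ : δ ≠ 0) : IsSuccLimit δ := by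
  rw [Ordinal.isSuccLimit_iff]
  exact ⟨hδ, fun α hαδ => let ⟨_, _, hαβ, hβδ⟩ := hD α hαδ.lt; hαδ.2 hαβ hβδ⟩

theorem mono (hDE : D ⊆ E) (hD : AccumulatesAt D δ) : AccumulatesAt E δ := fun α hα =>
  let ⟨β, hβ, h⟩ := hD α hα
  ⟨β, hDE hβ, h⟩

theorem trans (hE : AccumulatesAt E δ) (hED : ∀ ε ∈ E, AccumulatesAt D ε) :
    AccumulatesAt D δ := by
  intro α hα
  obtain ⟨ε, hεE, hαε, hεδ⟩ := hE α hα
  obtain ⟨β, hβD, hαβ, hβε⟩ := hED ε hεE α hαε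
  exact ⟨β, hβD, hαβ, hβε.trans hεδ⟩

theorem diff_iff : AccumulatesAt (D \ c) δ ↔ ∀ α < δ, ∃ β ∈ D, β < δ ∧ β ∉ c ∧ α < β := by
  simp only [AccumulatesAt, mem_sdiff]
  grind

theorem exists_inter_Ioo_subset_of_not_diff (h : ¬ AccumulatesAt (D \ c) δ) :
    ∃ α < δ, D ∩ Ioo α δ ⊆ c := by
  by_contra! hD
  exact h fun α hα =>
    let ⟨β, ⟨hβD, hβ⟩, hβc⟩ := not_subset.1 (hD α hα)
    ⟨β, ⟨hβD, hβc⟩, hβ⟩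

theorem lt_of_diff (h : AccumulatesAt (D \ c) δ) (hδ : 0 < δ) (hsub : D ∩ Iio γ ⊆ c) :
    γ < δ := by
  obtain ⟨β, ⟨hβD, hβc⟩, -, hβδ⟩ := h 0 hδ
  exact (not_lt.1 fun hβγ => hβc (hsub ⟨hβD, hβγ⟩)).trans_lt hβδ

end AccumulatesAt

theorem isClosedIn_accPtsOfDiffs (o : Ordinal) (D S : Set Ordinal) (C : Ordinal → Set Ordinal) :
    IsClosedIn o (accPtsOfDiffs o D S C) :=
  fun _ hδo _ hδ => ⟨hδo, fun γ hγ => hδ.trans fun _ hε => hε.2 γ hγ⟩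

section Trap

variable {D c : Set Ordinal} {α γ δ : Ordinal}

theorem le_of_inter_Ioo_subset (hc : c ⊆ Iio γ) (hD : AccumulatesAt D δ) (hαδ : α < δ)
    (htrap : D ∩ Ioo α δ ⊆ c) : δ ≤ γ := by
  by_contra! hγδ
  obtain ⟨β, hβD, hβ, hβδ⟩ := hD (max α γ) (max_lt hαδ hγδ)
  exact lt_asymm (hc (htrap ⟨hβD, (le_max_left _ _).trans_lt hβ, hβδ⟩))
    ((le_max_right _ _).trans_lt hβ)

theorem inter_Ioc_inter_Iio_subset (hc : IsClosedIn γ c) (hδ : IsSuccLimit δ)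
    (hD : AccumulatesAt D δ) (hαδ : α < δ) (htrap : D ∩ Ioo α δ ⊆ c) :
    D ∩ Ioc α δ ∩ Iio γ ⊆ c := by
  rintro β ⟨⟨hβD, hαβ, hβδ⟩, hβγ⟩
  rcases hβδ.lt_or_eq with hβδ | rfl
  · exact htrap ⟨hβD, hαβ, hβδ⟩
  · refine hc β hβγ hδ fun a ha => ?_
    obtain ⟨b, hbD, hab, hbβ⟩ := hD (max a α) (max_lt ha hαδ)
    exact ⟨b, htrap ⟨hbD, (le_max_right _ _).trans_lt hab, hbβ⟩,
      (le_max_left _ _).trans_lt hab, hbβ⟩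

end Trap

namespace Cardinal.IsRegular

variable {κ : Cardinal.{u}} {D : Set Ordinal.{u}}

theorem exists_bound (hκ : κ.IsRegular) {g : Ordinal.{u} → Ordinal.{u}}
    (hg : ∀ α < κ.ord, g α < κ.ord) {x : Ordinal.{u}} (hx : x < κ.ord) :
    ∃ b < κ.ord, ∀ α < x, g α ≤ b := by
  refine ⟨⨆ α : Iio x, g α, Ordinal.lift_iSup_lt_of_lt_cof ?_ fun α => hg α (α.2.trans hx),
    fun α hα => Ordinal.le_iSup (fun α : Iio x => g α) ⟨α, hα⟩⟩
  rw [Cardinal.mk_Iio_ordinal, ← Ordinal.lift_cof, hκ.cof_ord, Cardinal.lift_lift,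
    Cardinal.lift_lt]
  exact Cardinal.lt_ord.1 hx

/-- The least fixed point above `ζ` of a step function that passes the next element of `D`
and bounds `g` is reached after `ω` steps, hence stays below `κ`. -/
theorem exists_accumulatesAt_closed_under (hκ : κ.IsRegular) (hκunc : ℵ₀ < κ)
    (hDκ : D ⊆ Iio κ.ord) (hD : ∀ α < κ.ord, ∃ β ∈ D, α ≤ β) {g : Ordinal.{u} → Ordinal.{u}}
    (hg : ∀ α < κ.ord, g α < κ.ord) {ζ : Ordinal.{u}} (hζ : ζ < κ.ord) :
    ∃ δ < κ.ord, ζ < δ ∧ IsSuccLimit δ ∧ AccumulatesAt D δ ∧ ∀ α < δ, g α < δ := by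
  have hκlim : IsSuccLimit κ.ord := isSuccLimit_ord hκ.aleph0_le
  have step : ∀ x < κ.ord, ∃ y < κ.ord, x < y ∧ (∃ β ∈ D, x < β ∧ β ≤ y) ∧
      ∀ α < x, g α < y := by
    intro x hx
    obtain ⟨b, hb, hgb⟩ := hκ.exists_bound hg hx
    obtain ⟨β, hβD, hxβ⟩ := hD (x + 1) (hκlim.add_one_lt hx)
    have hxβ' : x < β := (lt_add_one x).trans_le hxβ
    exact ⟨max β (b + 1), max_lt (hDκ hβD) (hκlim.add_one_lt hb),
      hxβ'.trans_le (le_max_left _ _), ⟨β, hβD, hxβ', le_max_left _ _⟩,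
      fun α hα => (hgb α hα).trans_lt ((lt_add_one b).trans_le (le_max_right _ _))⟩
  choose! Y hYκ hxY hYD hYg using step
  have hδκ : nfp Y ζ < κ.ord := nfp_lt_ord_of_isRegular hκ hκunc.ne' hYκ hζ
  have hit : ∀ n, Y^[n] ζ < κ.ord := fun n => (iterate_le_nfp Y ζ n).trans_lt hδκ
  have hcofinal : ∀ α < nfp Y ζ, ∃ x < κ.ord, α < x ∧ Y x < nfp Y ζ := by
    intro α hα
    obtain ⟨n, hn⟩ := lt_nfp_iff.1 hα
    refine ⟨_, hit n, hn, ?_⟩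
    calc Y (Y^[n] ζ) = Y^[n + 1] ζ := (Function.iterate_succ_apply' Y n ζ).symm
      _ < Y (Y^[n + 1] ζ) := hxY _ (hit _)
      _ = Y^[n + 2] ζ := (Function.iterate_succ_apply' Y (n + 1) ζ).symm
      _ ≤ nfp Y ζ := iterate_le_nfp Y ζ _
  have hacc : AccumulatesAt D (nfp Y ζ) := fun α hα =>
    let ⟨x, hx, hαx, hYx⟩ := hcofinal α hα
    let ⟨β, hβD, hxβ, hβY⟩ := hYD x hx
    ⟨β, hβD, hαx.trans hxβ, hβY.trans_lt hYx⟩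
  have hζδ : ζ < nfp Y ζ := (hxY ζ hζ).trans_le (iterate_le_nfp Y ζ 1)
  refine ⟨nfp Y ζ, hδκ, hζδ, hacc.isSuccLimit (zero_le.trans_lt hζδ).ne', hacc,
    fun α hα => ?_⟩
  obtain ⟨x, hx, hαx, hYx⟩ := hcofinal α hα
  exact (hYg x hx α hαx).trans hYx

/-- A weak form of Fodor's lemma. -/
theorem exists_unbounded_fiber_of_regressive (hκ : κ.IsRegular) (hκunc : ℵ₀ < κ)
    (hDκ : D ⊆ Iio κ.ord) (hD : ∀ α < κ.ord, ∃ β ∈ D, α ≤ β) {F : Ordinal.{u} → Ordinal.{u}}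
    {ζ : Ordinal.{u}} (hζ : ζ < κ.ord)
    (hF : ∀ δ < κ.ord, ζ < δ → IsSuccLimit δ → AccumulatesAt D δ → F δ < δ) :
    ∃ α' < κ.ord, ∀ η < κ.ord,
      ∃ δ < κ.ord, η < δ ∧ IsSuccLimit δ ∧ AccumulatesAt D δ ∧ F δ ≤ α' := by
  by_contra! hfibers
  choose! g hgκ hg using hfibers
  obtain ⟨δ, hδκ, hζδ, hδlim, hδD, hδg⟩ :=
    hκ.exists_accumulatesAt_closed_under hκunc hDκ hD hgκ hζ
  have hFδ := hF δ hδκ hζδ hδlim hδD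
  exact (hg (F δ) (hFδ.trans hδκ) δ hδκ (hδg _ hFδ) hδlim hδD).false

end Cardinal.IsRegular

theorem IsClubIn.sep_closed_under {κ : Cardinal.{u}} (hκ : κ.IsRegular) (hκunc : ℵ₀ < κ)
    {D : Set Ordinal.{u}} (hD : IsClubIn κ.ord D) {k : Ordinal.{u} → Ordinal.{u}}
    (hk : ∀ x < κ.ord, k x < κ.ord) {α : Ordinal.{u}} (hα : α < κ.ord) :
    IsClubIn κ.ord {β ∈ D | α < β ∧ ∀ x < β, k x < β} where
  subset_Iio _ hβ := hD.subset_Iio hβ.1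
  unbounded η hη := by
    obtain ⟨δ, hδκ, hδ, hδlim, hδD, hδk⟩ := hκ.exists_accumulatesAt_closed_under hκunc
      hD.subset_Iio hD.unbounded hk (max_lt hη hα)
    exact ⟨δ, ⟨hD.isClosedIn δ hδκ hδlim hδD, (le_max_right _ _).trans_lt hδ, hδk⟩,
      ((le_max_left _ _).trans_lt hδ).le⟩
  isClosedIn δ hδκ hδlim hδacc := by
    refine ⟨hD.isClosedIn δ hδκ hδlim (hδacc.mono fun _ hβ => hβ.1), ?_, fun x hx => ?_⟩
    · obtain ⟨β, hβ, -, hβδ⟩ := hδacc 0 hδlim.pos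
      exact hβ.2.1.trans hβδ
    · obtain ⟨β, hβ, hxβ, hβδ⟩ := hδacc x hx
      exact (hβ.2.2 x hxβ).trans hβδ

namespace IsStronglyAmenable

variable {κ : Cardinal.{u}} {S : Set Ordinal.{u}} {C : Ordinal.{u} → Set Ordinal.{u}}
  {D : Set Ordinal.{u}}

theorem exists_mem_accPtsOfDiffs (hSA : IsStronglyAmenable κ.ord S C) (hκ : κ.IsRegular)
    (hκunc : ℵ₀ < κ) (hS : S ⊆ Iio κ.ord) (hCsub : ∀ γ ∈ S, C γ ⊆ Iio γ)
    (hCcl : ∀ γ ∈ S, IsClosedIn γ (C γ)) (hD : IsClubIn κ.ord D) {ζ : Ordinal.{u}}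
    (hζ : ζ < κ.ord) : ∃ δ ∈ accPtsOfDiffs κ.ord D S C, ζ ≤ δ := by
  by_contra! hbad
  have hwit : ∀ δ < κ.ord, ζ < δ → ∃ γ ∈ S, ∃ α < δ, D ∩ Ioo α δ ⊆ C γ := by
    intro δ hδκ hζδ
    have hfail : ¬ ∀ γ ∈ S, AccumulatesAt (D \ C γ) δ :=
      fun h => lt_asymm (hbad δ ⟨hδκ, h⟩) hζδ
    push Not at hfail
    obtain ⟨γ, hγ, hγδ⟩ := hfail
    exact ⟨γ, hγ, AccumulatesAt.exists_inter_Ioo_subset_of_not_diff hγδ⟩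
  choose! Γ hΓS F hFδ htrap using hwit
  obtain ⟨α', hα'κ, hfiber⟩ := hκ.exists_unbounded_fiber_of_regressive hκunc hD.subset_Iio
    hD.unbounded hζ fun δ hδκ hζδ _ _ => hFδ δ hδκ hζδ
  set k : Ordinal.{u} → Ordinal.{u} := fun x => if Γ x < κ.ord then Γ x else 0
  have hk : ∀ x < κ.ord, k x < κ.ord := fun x _ => by
    simp only [k]
    split_ifs with h
    exacts [h, hκ.ord_pos]
  obtain ⟨ε, hεκ, hε⟩ := hSA _ (hD.sep_closed_under hκ hκunc hk hα'κ)
  obtain ⟨δ, hδκ, hδ, hδlim, hδD, hFα'⟩ :=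
    hfiber (max (max ε α') ζ) (max_lt (max_lt hεκ hα'κ) hζ)
  obtain ⟨hεα'δ, hζδ⟩ := max_lt_iff.1 hδ
  obtain ⟨hεδ, hα'δ⟩ := max_lt_iff.1 hεα'δ
  have hγS : Γ δ ∈ S := hΓS δ hδκ hζδ
  have htrap' : D ∩ Ioo α' δ ⊆ C (Γ δ) := fun β hβ =>
    htrap δ hδκ hζδ ⟨hβ.1, hFα'.trans_lt hβ.2.1, hβ.2.2⟩
  have hδγ : δ ≤ Γ δ := le_of_inter_Ioo_subset (hCsub _ hγS) hδD hα'δ htrap'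
  have hkδ : k δ = Γ δ := if_pos (hS hγS)
  refine (hεδ.trans_le hδγ).not_ge (hε _ hγS ?_)
  rintro β ⟨⟨hβD, hα'β, hβk⟩, hβγ⟩
  have hβδ : β ≤ δ := not_lt.1 fun hδβ => lt_asymm hβγ (hkδ ▸ hβk δ hδβ)
  exact inter_Ioc_inter_Iio_subset (hCcl _ hγS) hδlim hδD hα'δ htrap'
    ⟨⟨hβD, hα'β, hβδ⟩, hβγ⟩

theorem isClubIn_accPtsOfDiffs (hSA : IsStronglyAmenable κ.ord S C) (hκ : κ.IsRegular)
    (hκunc : ℵ₀ < κ) (hS : S ⊆ Iio κ.ord) (hCsub : ∀ γ ∈ S, C γ ⊆ Iio γ)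
    (hCcl : ∀ γ ∈ S, IsClosedIn γ (C γ)) (hD : IsClubIn κ.ord D) :
    IsClubIn κ.ord (accPtsOfDiffs κ.ord D S C) where
  subset_Iio _ hδ := hδ.1
  unbounded _ hζ := hSA.exists_mem_accPtsOfDiffs hκ hκunc hS hCsub hCcl hD hζ
  isClosedIn := isClosedIn_accPtsOfDiffs _ _ _ _

end IsStronglyAmenable

theorem stmt_6_general (κ : Cardinal) (hκreg : κ.IsRegular) (hκunc : ℵ₀ < κ)
    (S : Set Ordinal) (hS : S ⊆ Set.Iio κ.ord)
    (C : Ordinal → Set Ordinal)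
    (hCsub : ∀ β ∈ S, C β ⊆ Set.Iio β)
    (hCclosed : ∀ β ∈ S, ∀ δ : Ordinal, δ < β → Order.IsSuccLimit δ →
      (∀ α < δ, ∃ γ ∈ C β, α < γ ∧ γ < δ) → δ ∈ C β) :
    -- strong amenability ...
    (∀ D : Set Ordinal, D ⊆ Set.Iio κ.ord →
        (∀ α < κ.ord, ∃ β ∈ D, α ≤ β) →
        (∀ δ : Ordinal, δ < κ.ord → Order.IsSuccLimit δ → (∀ α < δ, ∃ β ∈ D, α < β ∧ β < δ) → δ ∈ D) →
        ∃ ε < κ.ord, ∀ β ∈ S, D ∩ Set.Iio β ⊆ C β → β ≤ ε)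
    ↔ -- ... iff for every club D, club-many δ satisfy sup((D ∩ δ) \ C γ) = δ for all γ ∈ S
    (∀ D : Set Ordinal, D ⊆ Set.Iio κ.ord →
        (∀ α < κ.ord, ∃ β ∈ D, α ≤ β) →
        (∀ δ : Ordinal, δ < κ.ord → Order.IsSuccLimit δ → (∀ α < δ, ∃ β ∈ D, α < β ∧ β < δ) → δ ∈ D) →
        ∃ E : Set Ordinal, E ⊆ Set.Iio κ.ord ∧
          (∀ α < κ.ord, ∃ β ∈ E, α ≤ β) ∧
          (∀ δ : Ordinal, δ < κ.ord → Order.IsSuccLimit δ → (∀ α < δ, ∃ β ∈ E, α < β ∧ β < δ) → δ ∈ E) ∧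
          ∀ δ ∈ E, ∀ γ ∈ S, ∀ α < δ, ∃ β ∈ D, β < δ ∧ β ∉ C γ ∧ α < β) := by
  constructor
  · intro hSA D hDκ hDunb hDcl
    have hSA' : IsStronglyAmenable κ.ord S C := fun D hD =>
      hSA D hD.subset_Iio hD.unbounded hD.isClosedIn
    obtain ⟨hEκ, hEunb, hEcl⟩ :=
      hSA'.isClubIn_accPtsOfDiffs hκreg hκunc hS hCsub hCclosed ⟨hDκ, hDunb, hDcl⟩
    exact ⟨_, hEκ, hEunb, hEcl, fun δ hδ γ hγ => AccumulatesAt.diff_iff.1 (hδ.2 γ hγ)⟩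
  · intro hE D hDκ hDunb hDcl
    obtain ⟨E, hEκ, hEunb, -, hEacc⟩ := hE D hDκ hDunb hDcl
    obtain ⟨δ, hδE, hδ⟩ := hEunb 1 (lt_ord.2 (by simpa using hκreg.nat_lt 1))
    exact ⟨δ, hEκ hδE, fun γ hγ hsub =>
      (AccumulatesAt.lt_of_diff (AccumulatesAt.diff_iff.2 (hEacc δ hδE γ hγ))
        (zero_lt_one.trans_le hδ) hsub).le⟩

theorem stmt_6 (κ : Cardinal) (hκreg : κ.IsRegular) (hκunc : ℵ₀ < κ)
    (S : Set Ordinal) (hS : S ⊆ Set.Iio κ.ord)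
    (C : Ordinal → Set Ordinal)
    (hCsub : ∀ β ∈ S, C β ⊆ Set.Iio β)
    (hCclosed : ∀ β ∈ S, ∀ δ : Ordinal, δ < β → Order.IsSuccLimit δ →
      (∀ α < δ, ∃ γ ∈ C β, α < γ ∧ γ < δ) → δ ∈ C β)
    (hCsup : ∀ β ∈ S, sSup (C β) = sSup (Set.Iio β)) :
    -- strong amenability ...
    (∀ D : Set Ordinal, D ⊆ Set.Iio κ.ord →
        (∀ α < κ.ord, ∃ β ∈ D, α ≤ β) →
        (∀ δ : Ordinal, δ < κ.ord → Order.IsSuccLimit δ → (∀ α < δ, ∃ β ∈ D, α < β ∧ β < δ) → δ ∈ D) →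
        ∃ ε < κ.ord, ∀ β ∈ S, D ∩ Set.Iio β ⊆ C β → β ≤ ε)
    ↔ -- ... iff for every club D, club-many δ satisfy sup((D ∩ δ) \ C γ) = δ for all γ ∈ S
    (∀ D : Set Ordinal, D ⊆ Set.Iio κ.ord →
        (∀ α < κ.ord, ∃ β ∈ D, α ≤ β) →
        (∀ δ : Ordinal, δ < κ.ord → Order.IsSuccLimit δ → (∀ α < δ, ∃ β ∈ D, α < β ∧ β < δ) → δ ∈ D) →
        ∃ E : Set Ordinal, E ⊆ Set.Iio κ.ord ∧
          (∀ α < κ.ord, ∃ β ∈ E, α ≤ β) ∧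
          (∀ δ : Ordinal, δ < κ.ord → Order.IsSuccLimit δ → (∀ α < δ, ∃ β ∈ E, α < β ∧ β < δ) → δ ∈ E) ∧
          ∀ δ ∈ E, ∀ γ ∈ S, ∀ α < δ, ∃ β ∈ D, β < δ ∧ β ∉ C γ ∧ α < β) :=
  stmt_6_general κ hκreg hκunc S hS C hCsub hCclosed
end

section
/- Let θ be an infinite regular cardinal and κ a cardinal with cf(κ) ≠ θ. Suppose there exists a sequence ⟨g_β : β < κ⟩ in θ^θ such that for every cofinal B ⊆ κ, {g_β : β ∈ B} is unbounded in (θ^θ, <*). Then 𝔟_θ ≤ cf(κ) ≤ 𝔡_θ. -/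
open Cardinal Ordinal Set

/-- `f` is a function from `θ` to `θ` (as a function on ordinals). -/
def intoFun (θ : Cardinal) (f : Ordinal → Ordinal) : Prop :=
  ∀ τ < θ.ord, f τ < θ.ord

/-- `f <* g`: eventual domination below `θ`. -/
def evLt (θ : Cardinal) (f g : Ordinal → Ordinal) : Prop :=
  ∃ ε < θ.ord, ∀ τ : Ordinal, ε ≤ τ → τ < θ.ord → f τ < g τ

/-- The bounding number `𝔟_θ` of `(θ^θ, <*)`. -/
noncomputable def bNum (θ : Cardinal) : Cardinal :=
  sInf { c : Cardinal | ∃ o : Ordinal, o.card = c ∧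
    ∃ F : Ordinal → Ordinal → Ordinal,
      (∀ i < o, intoFun θ (F i)) ∧
      ¬ ∃ g : Ordinal → Ordinal, intoFun θ g ∧ ∀ i < o, evLt θ (F i) g }

/-- The dominating number `𝔡_θ` of `(θ^θ, <*)`. -/
noncomputable def dNum (θ : Cardinal) : Cardinal :=
  sInf { c : Cardinal | ∃ o : Ordinal, o.card = c ∧
    ∃ F : Ordinal → Ordinal → Ordinal,
      (∀ i < o, intoFun θ (F i)) ∧
      ∀ g : Ordinal → Ordinal, intoFun θ g → ∃ i < o, evLt θ g (F i) }

/-!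
For `𝔟_θ ≤ cf κ`, restrict `g` to a fundamental sequence of `κ`: its range is cofinal, so the
restricted family, of length `cf κ`, is unbounded. For `cf κ ≤ 𝔡_θ`, take a dominating family
`⟨F_i : i < o⟩` with `|o| < cf κ` and choose `i(β) < o` with `g_β <* F_{i(β)}`. By the pigeonhole
principle for `cf κ`, some fibre of `i` is cofinal in `κ`, and `F_i` bounds `g` on that fibre.
As `𝔡_θ` is an `sInf`, which is `0` on the empty set, the argument also needs one dominating
family to exist; the successors of all functions `θ → θ` form one.
-/

universe u

theorem Ordinal.exists_cofinal_fiber_s9 {a o : Ordinal} (ho : o.card < a.cof)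
    (idx : Ordinal → Ordinal) (hidx : ∀ β < a, idx β < o) :
    ∃ i < o, ∀ α < a, ∃ β < a, idx β = i ∧ α ≤ β := by
  by_contra! hbounded
  choose! bound hbound_lt hbound using hbounded
  set s := ⨆ x : o.ToType, bound x.toOrd
  have hs : s < a :=
    iSup_lt_of_lt_cof (by rwa [Cardinal.mk_toType]) fun x ↦ hbound_lt _ x.toOrd.2
  have hi := hidx s hs
  have hs_le : bound (idx s) ≤ s := by
    simpa using Ordinal.le_iSup (fun x : o.ToType ↦ bound x.toOrd) (Ordinal.ToType.mk ⟨idx s, hi⟩)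
  exact (hbound (idx s) hi s hs rfl).not_ge hs_le

theorem exists_ordinal_indexing {ι : Type u} (φ : ι → Ordinal.{u} → Ordinal.{u}) :
    ∃ o : Ordinal.{u}, ∃ F : Ordinal → Ordinal → Ordinal,
      (∀ i < o, ∃ x, F i = φ x) ∧ ∀ x, ∃ i < o, F i = φ x := by
  let r := WellOrderingRel (α := ι)
  refine ⟨Ordinal.type r, fun i ↦ if h : i < Ordinal.type r then φ (Ordinal.enum r ⟨i, h⟩) else 0,
    fun i hi ↦ ⟨_, dif_pos hi⟩, fun x ↦ ⟨_, Ordinal.typein_lt_type r x, ?_⟩⟩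
  simp [Ordinal.typein_lt_type r x]

theorem exists_dominating_family {θ : Cardinal.{u}} (hθ : ℵ₀ ≤ θ) :
    ∃ o : Ordinal.{u}, ∃ F : Ordinal → Ordinal → Ordinal, (∀ i < o, intoFun θ (F i)) ∧
      ∀ g, intoFun θ g → ∃ i < o, evLt θ g (F i) := by
  let succOf (s : θ.ord.ToType → θ.ord.ToType) (τ : Ordinal) : Ordinal :=
    if hτ : τ < θ.ord then (s (Ordinal.ToType.mk ⟨τ, hτ⟩) : Ordinal) + 1 else 0
  obtain ⟨o, F, hF_mem, hF_all⟩ := exists_ordinal_indexing succOf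
  refine ⟨o, F, fun i hi τ hτ ↦ ?_, fun g hg ↦ ?_⟩
  · obtain ⟨s, hFi⟩ := hF_mem i hi
    simpa [hFi, succOf, hτ] using (Cardinal.isSuccLimit_ord hθ).add_one_lt (s _).toOrd.2
  · obtain ⟨i, hi, hFi⟩ := hF_all fun x ↦ Ordinal.ToType.mk ⟨g x, hg _ x.toOrd.2⟩
    refine ⟨i, hi, 0, (Cardinal.isSuccLimit_ord hθ).bot_lt, fun τ _ hτ ↦ ?_⟩
    simp [hFi, succOf, hτ]

theorem bNum_le_card {θ : Cardinal} {o : Ordinal} {F : Ordinal → Ordinal → Ordinal}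
    (hF : ∀ i < o, intoFun θ (F i))
    (hunbounded : ¬ ∃ g, intoFun θ g ∧ ∀ i < o, evLt θ (F i) g) : bNum θ ≤ o.card :=
  csInf_le' ⟨o, rfl, F, hF, hunbounded⟩

theorem le_dNum {θ c : Cardinal.{u}} (hθ : ℵ₀ ≤ θ)
    (h : ∀ (o : Ordinal) (F : Ordinal → Ordinal → Ordinal), (∀ i < o, intoFun θ (F i)) →
      (∀ g, intoFun θ g → ∃ i < o, evLt θ g (F i)) → c ≤ o.card) : c ≤ dNum θ := by
  obtain ⟨o, F, hF, hdom⟩ := exists_dominating_family hθ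
  refine le_csInf ⟨_, o, rfl, F, hF, hdom⟩ ?_
  rintro _ ⟨o, rfl, F, hF, hdom⟩
  exact h o F hF hdom

def IsCofinallyUnbounded (θ κ : Cardinal) (g : Ordinal → Ordinal → Ordinal) : Prop :=
  ∀ B : Set Ordinal, B ⊆ Set.Iio κ.ord → (∀ α < κ.ord, ∃ β ∈ B, α ≤ β) →
    ¬ ∃ h : Ordinal → Ordinal, intoFun θ h ∧ ∀ β ∈ B, evLt θ (g β) h

theorem bNum_le_cof {θ κ : Cardinal.{u}} {g : Ordinal → Ordinal → Ordinal}
    (hg : ∀ β < κ.ord, intoFun θ (g β))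
    (hub : IsCofinallyUnbounded θ κ g) :
    bNum θ ≤ (κ.ord).cof := by
  obtain ⟨f, hf⟩ := Ordinal.exists_isFundamentalSeq (o := κ.ord) rfl
  rw [← Cardinal.card_ord κ.ord.cof]
  refine bNum_le_card (F := fun i ↦ if h : i < κ.ord.cof.ord then g (f ⟨i, h⟩) else 0)
    (fun i hi ↦ by simpa [hi] using hg _ (f ⟨i, hi⟩).2) ?_
  rintro ⟨h, hh, hdom⟩
  refine hub (range fun i ↦ (f i : Ordinal)) (range_subset_iff.2 fun i ↦ (f i).2)
    (fun α hα ↦ ?_) ⟨h, hh, ?_⟩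
  · obtain ⟨_, ⟨i, rfl⟩, hle⟩ := hf.isCofinal_range ⟨α, hα⟩
    exact ⟨f i, mem_range_self i, hle⟩
  · rintro _ ⟨i, rfl⟩
    simpa only [dif_pos (mem_Iio.1 i.2)] using hdom i i.2

theorem cof_le_dNum {θ κ : Cardinal.{u}} (hθ : ℵ₀ ≤ θ) {g : Ordinal → Ordinal → Ordinal}
    (hg : ∀ β < κ.ord, intoFun θ (g β))
    (hub : IsCofinallyUnbounded θ κ g) :
    (κ.ord).cof ≤ dNum θ := by
  refine le_dNum hθ fun o F hF hdom ↦ ?_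
  by_contra! ho
  choose! idx hidx hg_lt using fun β hβ ↦ hdom (g β) (hg β hβ)
  obtain ⟨i, hi, hcofinal⟩ := Ordinal.exists_cofinal_fiber_s9 ho idx hidx
  refine hub {β | β < κ.ord ∧ idx β = i} (fun β hβ ↦ hβ.1) (fun α hα ↦ ?_)
    ⟨F i, hF i hi, fun β hβ ↦ hβ.2 ▸ hg_lt β hβ.1⟩
  obtain ⟨β, hβ, hβi, hle⟩ := hcofinal α hα
  exact ⟨β, ⟨hβ, hβi⟩, hle⟩

theorem stmt_9_general (θ κ : Cardinal) (hθ : ℵ₀ ≤ θ)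
    (hcf : (κ.ord).cof ≠ θ)
    (g : Ordinal → Ordinal → Ordinal)
    (hg : ∀ β < κ.ord, intoFun θ (g β))
    (hub : ∀ B : Set Ordinal, B ⊆ Set.Iio κ.ord →
      (∀ α < κ.ord, ∃ β ∈ B, α ≤ β) →
      ¬ ∃ h : Ordinal → Ordinal, intoFun θ h ∧ ∀ β ∈ B, evLt θ (g β) h) :
    bNum θ ≤ (κ.ord).cof ∧ (κ.ord).cof ≤ dNum θ :=
  ⟨bNum_le_cof hg hub, cof_le_dNum hθ hg hub⟩

theorem stmt_9 (θ κ : Cardinal) (hθ : ℵ₀ ≤ θ) (hθreg : θ.IsRegular)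
    (hcf : (κ.ord).cof ≠ θ)
    (g : Ordinal → Ordinal → Ordinal)
    (hg : ∀ β < κ.ord, intoFun θ (g β))
    (hub : ∀ B : Set Ordinal, B ⊆ Set.Iio κ.ord →
      (∀ α < κ.ord, ∃ β ∈ B, α ≤ β) →
      ¬ ∃ h : Ordinal → Ordinal, intoFun θ h ∧ ∀ β ∈ B, evLt θ (g β) h) :
    bNum θ ≤ (κ.ord).cof ∧ (κ.ord).cof ≤ dNum θ :=
  stmt_9_general θ κ hθ hcf g hg hub
end

section
/- Let θ ≤ μ ≤ κ be infinite cardinals. Then there exists a map p : κ^μ × κ → θ such that for every family {B_i : i < μ} of subsets of κ each of size κ, there exists η < κ^μ with p[{η} × B_i] = θ for all i < μ. -/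
open Cardinal Ordinal Set

/-- Injective choice: given `o`-many sets each of cardinality `κ` bigger than the
cardinality of every proper initial segment of `o`, one can pick pairwise distinct
representatives. -/
lemma stmt_10_aux (κ : Cardinal.{0}) (o : Ordinal.{0}) (ho : ∀ α < o, α.card < κ)
    (C : Ordinal → Set Ordinal) (hC : ∀ α < o, Cardinal.mk ↥(C α) = Cardinal.lift.{1} κ) :
    ∃ F : Ordinal → Ordinal, ∀ α < o, F α ∈ C α ∧ ∀ β < α, F β ≠ F α := by
  classical
  set step : ∀ α : Ordinal, (∀ β : Ordinal, β < α → Ordinal) → Ordinal :=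
    fun α IH =>
      if h : (C α \ {x | ∃ β, ∃ hβ : β < α, IH β hβ = x}).Nonempty then h.some else 0
    with hstep
  set F : Ordinal → Ordinal := Ordinal.lt_wf.fix step with hF
  have hFeq : ∀ α : Ordinal,
      F α = if h : (C α \ {x | ∃ β, ∃ _ : β < α, F β = x}).Nonempty then h.some else 0 := by
    intro α
    have := Ordinal.lt_wf.fix_eq step α
    simpa [hF, hstep] using this
  refine ⟨F, fun α hα => ?_⟩
  have hne : (C α \ {x | ∃ β, ∃ _ : β < α, F β = x}).Nonempty := by
    rw [Set.diff_nonempty]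
    intro hsub
    have h1 : {x | ∃ β, ∃ _ : β < α, F β = x} ⊆ Set.range (fun b : ↥(Set.Iio α) => F b.1) := by
      rintro x ⟨β, hβ, rfl⟩
      exact ⟨⟨β, hβ⟩, rfl⟩
    have h2 : Cardinal.mk ↥(C α) ≤ Cardinal.mk ↥{x | ∃ β, ∃ _ : β < α, F β = x} :=
      Cardinal.mk_le_mk_of_subset hsub
    have h3 : Cardinal.mk ↥{x | ∃ β, ∃ _ : β < α, F β = x} ≤
        Cardinal.mk ↥(Set.Iio α) := by
      refine le_trans (Cardinal.mk_le_mk_of_subset h1) ?_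
      exact Cardinal.mk_range_le
    rw [hC α hα] at h2
    rw [Ordinal.mk_Iio_ordinal] at h3
    have h4 : Cardinal.lift.{1} α.card < Cardinal.lift.{1} κ :=
      Cardinal.lift_lt.mpr (ho α hα)
    exact absurd (h2.trans h3) (not_le.mpr h4)
  have : F α = hne.some := by rw [hFeq α, dif_pos hne]
  have hmem := hne.some_mem
  rw [← this] at hmem
  exact ⟨hmem.1, fun β hβ hc => hmem.2 ⟨β, hβ, hc⟩⟩

theorem stmt_10 (θ μ κ : Cardinal.{0}) (hθ : ℵ₀ ≤ θ) (hθμ : θ ≤ μ) (hμκ : μ ≤ κ) :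
    ∃ p : Ordinal.{0} → Ordinal.{0} → Ordinal.{0},
      (∀ η < (κ ^ μ).ord, ∀ β < κ.ord, p η β < θ.ord) ∧
      ∀ B : Ordinal → Set Ordinal,
        (∀ i < μ.ord, B i ⊆ Set.Iio κ.ord ∧ Cardinal.mk ↥(B i) = Cardinal.lift.{1} κ) →
        ∃ η < (κ ^ μ).ord, ∀ i < μ.ord, ∀ τ < θ.ord, ∃ β ∈ B i, p η β = τ := by
  classical
  have hμ : ℵ₀ ≤ μ := hθ.trans hθμ
  have hκ : ℵ₀ ≤ κ := hμ.trans hμκ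
  have hθκ : θ ≤ κ := hθμ.trans hμκ
  have hθ0 : (0 : Ordinal) < θ.ord := by
    rw [Cardinal.lt_ord]
    simpa using (aleph0_pos.trans_le hθ)
  -- the equivalence giving the rows
  have hmk : Cardinal.mk ↥(Set.Iio (κ ^ μ).ord) =
      Cardinal.mk (↥(Set.Iio μ.ord) → ↥(Set.Iio κ.ord) × ↥(Set.Iio θ.ord)) := by
    simp only [← Cardinal.power_def, Cardinal.mk_prod, Cardinal.lift_id,
      Ordinal.mk_Iio_ordinal, Cardinal.card_ord, ← Cardinal.lift_mul, ← Cardinal.lift_power,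
      Cardinal.lift_inj]
    rw [Cardinal.mul_eq_left hκ hθκ (aleph0_pos.trans_le hθ).ne']
  obtain ⟨e⟩ := Cardinal.eq.mp hmk
  set E : Ordinal → Ordinal → Ordinal × Ordinal := fun η a =>
    if hη : η < (κ ^ μ).ord then
      if ha : a < μ.ord then
        (((e ⟨η, hη⟩ ⟨a, ha⟩).1 : Ordinal), ((e ⟨η, hη⟩ ⟨a, ha⟩).2 : Ordinal))
      else (0, 0)
    else (0, 0) with hEdef
  have hE : ∀ η, η < (κ ^ μ).ord → ∀ a, a < μ.ord →
      (E η a).1 < κ.ord ∧ (E η a).2 < θ.ord := by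
    intro η hη a ha
    rw [hEdef]
    simp only [dif_pos hη, dif_pos ha]
    exact ⟨(e ⟨η, hη⟩ ⟨a, ha⟩).1.2, (e ⟨η, hη⟩ ⟨a, ha⟩).2.2⟩
  have hEsurj : ∀ h : Ordinal → Ordinal × Ordinal,
      (∀ a, a < μ.ord → (h a).1 < κ.ord ∧ (h a).2 < θ.ord) →
      ∃ η < (κ ^ μ).ord, ∀ a, a < μ.ord → E η a = h a := by
    intro h hh
    set h' : ↥(Set.Iio μ.ord) → ↥(Set.Iio κ.ord) × ↥(Set.Iio θ.ord) :=
      fun a => (⟨(h a).1, (hh a a.2).1⟩, ⟨(h a).2, (hh a a.2).2⟩) with hh'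
    refine ⟨(e.symm h').1, (e.symm h').2, fun a ha => ?_⟩
    have hη : ((e.symm h').1 : Ordinal) < (κ ^ μ).ord := (e.symm h').2
    rw [hEdef]
    simp only [dif_pos hη, dif_pos ha]
    have : (⟨(e.symm h').1, hη⟩ : ↥(Set.Iio (κ ^ μ).ord)) = e.symm h' := rfl
    rw [this, e.apply_symm_apply, hh']
  -- defining p
  refine ⟨fun η β =>
    if hs : {a | a < μ.ord ∧ (E η a).1 = β}.Nonempty then
      (E η (sInf {a | a < μ.ord ∧ (E η a).1 = β})).2 else 0, fun η hη β _ => ?_, ?_⟩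
  · show (if hs : {a | a < μ.ord ∧ (E η a).1 = β}.Nonempty then
        (E η (sInf {a | a < μ.ord ∧ (E η a).1 = β})).2 else 0) < θ.ord
    by_cases hs : {a | a < μ.ord ∧ (E η a).1 = β}.Nonempty
    · rw [dif_pos hs]
      have hmem := csInf_mem hs
      exact (hE η hη _ hmem.1).2
    · rw [dif_neg hs]; exact hθ0
  · intro B hB
    -- pairing bijection
    have hmk2 : Cardinal.mk ↥(Set.Iio μ.ord) =
        Cardinal.mk (↥(Set.Iio μ.ord) × ↥(Set.Iio θ.ord)) := by
      simp only [Cardinal.mk_prod, Cardinal.lift_id, Ordinal.mk_Iio_ordinal,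
        Cardinal.card_ord, ← Cardinal.lift_mul, Cardinal.lift_inj]
      rw [Cardinal.mul_eq_left hμ hθμ (aleph0_pos.trans_le hθ).ne']
    obtain ⟨π⟩ := Cardinal.eq.mp hmk2
    set C : Ordinal → Set Ordinal := fun α =>
      if hα : α < μ.ord then B ((π ⟨α, hα⟩).1 : Ordinal) else ∅ with hCdef
    have hCB : ∀ α (hα : α < μ.ord), C α = B ((π ⟨α, hα⟩).1 : Ordinal) := by
      intro α hα; rw [hCdef]; simp only [dif_pos hα]
    obtain ⟨F, hF⟩ := stmt_10_aux κ μ.ord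
      (fun α hα => lt_of_lt_of_le (Cardinal.lt_ord.mp hα) hμκ) C
      (by
        intro α hα
        rw [hCB α hα]
        exact (hB _ (π ⟨α, hα⟩).1.2).2)
    set h : Ordinal → Ordinal × Ordinal := fun α =>
      if hα : α < μ.ord then (F α, ((π ⟨α, hα⟩).2 : Ordinal)) else (0, 0) with hhdef
    have hFB : ∀ α (hα : α < μ.ord), F α ∈ B ((π ⟨α, hα⟩).1 : Ordinal) := by
      intro α hα
      have := (hF α hα).1
      rwa [hCB α hα] at this
    obtain ⟨η, hη, hEη⟩ := hEsurj h (by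
      intro a ha
      rw [hhdef]
      simp only [dif_pos ha]
      refine ⟨?_, (π ⟨a, ha⟩).2.2⟩
      exact (hB _ (π ⟨a, ha⟩).1.2).1 (hFB a ha))
    refine ⟨η, hη, fun i hi τ hτ => ?_⟩
    set x : ↥(Set.Iio μ.ord) := π.symm (⟨i, hi⟩, ⟨τ, hτ⟩) with hx
    have hπx : π x = (⟨i, hi⟩, ⟨τ, hτ⟩) := π.apply_symm_apply _
    have hα : (x : Ordinal) < μ.ord := x.2
    have hxeq : (⟨(x : Ordinal), hα⟩ : ↥(Set.Iio μ.ord)) = x := rfl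
    refine ⟨F x, ?_, ?_⟩
    · have := hFB x hα
      rw [hxeq, hπx] at this
      exact this
    · have hhx : h x = (F x, τ) := by
        rw [hhdef]; simp only [dif_pos hα]
        rw [hxeq, hπx]
      have hEx : E η x = (F x, τ) := by rw [hEη x hα, hhx]
      set S : Set Ordinal := {a | a < μ.ord ∧ (E η a).1 = F (x : Ordinal)} with hS
      have hxS : (x : Ordinal) ∈ S := ⟨hα, by rw [hEx]⟩
      have hsne : S.Nonempty := ⟨x, hxS⟩
      have hinf := csInf_mem hsne
      have hle : sInf S ≤ (x : Ordinal) := csInf_le (OrderBot.bddBelow S) hxS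
      have hFinf : F (sInf S) = F (x : Ordinal) := by
        have h1 := hinf.2
        have h2 := hEη (sInf S) hinf.1
        rw [h2, hhdef] at h1
        simpa only [dif_pos hinf.1] using h1
      have heq : sInf S = (x : Ordinal) := by
        rcases lt_or_eq_of_le hle with hlt | heq
        · exact absurd hFinf ((hF (x : Ordinal) hα).2 (sInf S) hlt)
        · exact heq
      show (if hs : S.Nonempty then (E η (sInf S)).2 else 0) = τ
      rw [dif_pos hsne, heq, hEx]
end

section
/- Suppose ν = ν^θ < cf(κ) ≤ 2^ν for infinite cardinals θ, ν, κ. Then there exists a colouring c : [κ]² → θ such that for every sequence ⟨B_τ : τ < θ⟩ of cofinal subsets of κ, there exists η < ν such that for every τ < θ, the set {β ∈ B_τ \ (η+1) : c(η,β) = τ} is cofinal in κ. -/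
/-!
Split `κ` into `cf κ ≤ 2^ν` bounded blocks and, by the Engelking–Karłowicz theorem (this is where
`ν^θ = ν` enters), fix maps `F_η` (`η < ν`) from blocks to `θ` such that every injective
`θ`-sequence of blocks is inverted by some `F_η`; colour `c(η, β) = F_η(block of β)`.
Given cofinal sets `B_τ` and `α < κ`, as `θ < cf κ` we can greedily pick `β_τ ∈ B_τ` above `α`
in pairwise distinct blocks, and the `F_η` inverting this sequence gives `c(η, β_τ) = τ`.
So every `α < κ` has a good `η < ν`, and since `ν < cf κ` one `η` is good for all `α`.
-/

open Cardinal Ordinal Set Function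

universe u

theorem exists_leftInverse_family_on_cube {T V : Type*} [Nonempty T] [Nonempty V] :
    ∃ F : (T × T → V) × (T → T × T → Bool) → (V → Bool) → T,
      ∀ s : T → V → Bool, Injective s → ∃ i, LeftInverse (F i) s := by
  -- For `i = (d, w)`, `d` picks a coordinate separating each pair of points of `range s`, so
  -- `t ↦ s t ∘ d` is still injective; it is `w`, and `F i` undoes it.
  refine ⟨fun i x => invFun i.2 (x ∘ i.1), fun s hs => ?_⟩
  have hsep : ∀ p : T × T, ∃ v, s p.1 ≠ s p.2 → s p.1 v ≠ s p.2 v := fun p => by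
    by_cases h : s p.1 = s p.2
    · exact ⟨Classical.arbitrary V, fun h' => (h' h).elim⟩
    · obtain ⟨v, hv⟩ := ne_iff.1 h
      exact ⟨v, fun _ => hv⟩
  choose d hd using hsep
  have hw : Injective fun t => s t ∘ d := fun t t' h => by
    by_contra hne
    exact hd (t, t') (hs.ne hne) (congrFun h (t, t'))
  exact ⟨(d, fun t => s t ∘ d), leftInverse_invFun hw⟩

theorem mk_leftInverse_family_index_le {T W : Type u} (hT : ℵ₀ ≤ #T) (hW : ℵ₀ ≤ #W)
    (hWT : #W ^ #T = #W) : #((T × T → W) × (T → T × T → Bool)) ≤ #W := by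
  have h2W : (2 : Cardinal) ^ #T ≤ #W :=
    (power_le_power_right ((natCast_lt_aleph0 (n := 2)).le.trans hW)).trans_eq hWT
  have hTT : #T * #T = #T := mul_eq_self hT
  calc #((T × T → W) × (T → T × T → Bool))
      = #W ^ (#T * #T) * ((2 : Cardinal) ^ (#T * #T)) ^ #T := by simp
    _ ≤ #W * #W := by
      rw [hTT, ← power_mul, hTT, hWT]
      exact mul_le_mul_right h2W _
    _ = #W := mul_eq_self hW

theorem engelking_karlowicz {T W X : Type u} (hT : ℵ₀ ≤ #T) (hW : ℵ₀ ≤ #W)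
    (hWT : #W ^ #T = #W) (hX : #X ≤ 2 ^ #W) :
    ∃ F : W → X → T, ∀ s : T → X, Injective s → ∃ w, LeftInverse (F w) s := by
  have : Nonempty T := mk_ne_zero_iff.1 (aleph0_pos.trans_le hT).ne'
  have : Nonempty W := mk_ne_zero_iff.1 (aleph0_pos.trans_le hW).ne'
  obtain ⟨j⟩ : Nonempty (X ↪ (W → Bool)) := le_def _ _ |>.1 (by simpa using hX)
  obtain ⟨g⟩ := le_def _ _ |>.1 (mk_leftInverse_family_index_le hT hW hWT)
  obtain ⟨F, hF⟩ := exists_leftInverse_family_on_cube (T := T) (V := W)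
  refine ⟨fun w x => F (invFun g w) (j x), fun s hs => ?_⟩
  obtain ⟨i, hi⟩ := hF _ (j.injective.comp hs)
  exact ⟨g i, fun t => by simpa [leftInverse_invFun g.injective i] using hi t⟩

theorem exists_injective_forall_mem {T ι : Type*} [LinearOrder T] [WellFoundedLT T]
    {S : T → Set ι} (hS : ∀ t (g : Iio t → ι), (S t \ range g).Nonempty) :
    ∃ s : T → ι, Injective s ∧ ∀ t, s t ∈ S t := by
  choose next hnext using hS
  let s : T → ι := wellFounded_lt.fix fun t g => next t fun u => g u u.2
  have hs : ∀ t, s t = next t fun u => s u := wellFounded_lt.fix_eq _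
  refine ⟨s, Injective.of_lt_imp_ne fun t t' hlt h => ?_, fun t => hs t ▸ (hnext t _).1⟩
  exact (hnext t' fun u => s u).2 ⟨⟨t, hlt⟩, h.trans (hs t')⟩

namespace Ordinal

def HasBoundedFibres (o : Ordinal.{u}) {X : Type*} (π : Ordinal.{u} → X) : Prop :=
  ∀ x, ∃ γ < o, ∀ β < o, π β = x → β ≤ γ

theorem exists_hasBoundedFibres {o : Ordinal.{u}} (ho : o ≠ 0) :
    ∃ (X : Type u) (π : Ordinal.{u} → X), #X = o.cof ∧ o.HasBoundedFibres π := by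
  obtain ⟨s, hs, hcard⟩ := Order.exists_cof_eq o.ToType
  have : Nonempty o.ToType := nonempty_toType_iff.2 ho
  have hπ : ∀ β, ∃ x : s, β < o → β ≤ ((x : o.ToType) : Ordinal) := fun β => by
    by_cases hβ : β < o
    · obtain ⟨y, hy, hle⟩ := hs (ToType.mk ⟨β, hβ⟩)
      exact ⟨⟨y, hy⟩, fun _ => ToType.mk.le_symm_apply.2 hle⟩
    · exact ⟨⟨_, hs.nonempty.some_mem⟩, fun h => (hβ h).elim⟩
  choose π hπ using hπ
  refine ⟨s, π, hcard.trans (cof_toType o), fun x => ⟨(x.1 : Ordinal), (ToType.toOrd x.1).2, ?_⟩⟩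
  rintro β hβ rfl
  exact hπ β hβ

variable {o : Ordinal.{u}} {X : Type u} {π : Ordinal.{u} → X}

def IsCofinalBelow (o : Ordinal) (B : Set Ordinal) : Prop :=
  B ⊆ Iio o ∧ ∀ α < o, ∃ β ∈ B, α ≤ β

theorem HasBoundedFibres.exists_mem_notMem (hπ : o.HasBoundedFibres π) {B : Set Ordinal}
    (hB : IsCofinalBelow o B) {A : Set X} (hA : #A < o.cof) {α : Ordinal} (hα : α < o) :
    ∃ β ∈ B, α ≤ β ∧ π β ∉ A := by
  choose γ hγo hγ using hπ
  have hsup : ⨆ x : A, γ x + 1 < o := iSup_add_one_lt_of_lt_cof hA fun x => hγo x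
  obtain ⟨β, hβB, hβ⟩ := hB.2 _ (max_lt hα hsup)
  refine ⟨β, hβB, le_of_max_le_left hβ, fun hβA => ?_⟩
  have hle := hγ _ β (hB.1 hβB) rfl
  have := (Ordinal.le_iSup (fun x : A => γ x + 1) ⟨π β, hβA⟩).trans (le_of_max_le_right hβ)
  exact (Order.add_one_le_iff.1 this).not_ge hle

theorem HasBoundedFibres.exists_injective_comp {T : Type u} [LinearOrder T] [WellFoundedLT T]
    (hπ : o.HasBoundedFibres π) (hT : #T < o.cof) {B : T → Set Ordinal}
    (hB : ∀ t, IsCofinalBelow o (B t)) {α : Ordinal} (hα : α < o) :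
    ∃ s : T → Ordinal, (∀ t, s t ∈ B t ∧ α ≤ s t) ∧ Injective (π ∘ s) := by
  obtain ⟨x, hx, hxS⟩ := exists_injective_forall_mem
    (S := fun t => π '' {β ∈ B t | α ≤ β}) fun t g => by
      obtain ⟨β, hβB, hαβ, hβg⟩ := hπ.exists_mem_notMem (hB t)
        ((mk_range_le.trans (mk_set_le _)).trans_lt hT) hα
      exact ⟨π β, ⟨β, ⟨hβB, hαβ⟩, rfl⟩, hβg⟩
  choose s hs hπs using hxS
  exact ⟨s, hs, by rwa [show π ∘ s = x from funext hπs]⟩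

theorem exists_forall_of_forall_exists {W : Type u} (hW : #W < o.cof)
    {P : W → Ordinal.{u} → Prop} (hP : ∀ w, Antitone (P w)) (h : ∀ α < o, ∃ w, P w α) :
    ∃ w, ∀ α < o, P w α := by
  by_contra! hne
  choose α hαo hα using hne
  obtain ⟨w, hw⟩ := h _ (iSup_lt_of_lt_cof hW hαo)
  exact hα w (hP w (Ordinal.le_iSup α w) hw)

end Ordinal

section Colouring

variable {θ ν : Cardinal.{u}} {X : Type u}

noncomputable def ekColouring (F : ν.ord.ToType → X → θ.ord.ToType) (π : Ordinal.{u} → X)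
    (η β : Ordinal.{u}) : Ordinal.{u} :=
  if h : η < ν.ord then F (ToType.mk ⟨η, h⟩) (π β) else 0

theorem ekColouring_lt (hθ : θ ≠ 0) (F : ν.ord.ToType → X → θ.ord.ToType)
    (π : Ordinal.{u} → X) (η β : Ordinal.{u}) : ekColouring F π η β < θ.ord := by
  unfold ekColouring
  split_ifs
  · exact (ToType.toOrd _).2
  · simpa [pos_iff_ne_zero] using hθ

theorem ekColouring_toOrd (F : ν.ord.ToType → X → θ.ord.ToType) (π : Ordinal.{u} → X)
    (w : ν.ord.ToType) (β : Ordinal.{u}) : ekColouring F π w β = F w (π β) := by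
  rw [ekColouring, dif_pos (mem_Iio.1 (ToType.toOrd w).2)]
  exact congrArg (fun w' => (F w' (π β) : Ordinal)) (ToType.mk.apply_symm_apply w)

end Colouring

theorem stmt_12_general (θ ν κ : Cardinal) (hθ : ℵ₀ ≤ θ) (hν : ℵ₀ ≤ ν)
    (hpow : ν ^ θ = ν) (h1 : ν < (κ.ord).cof) (h2 : (κ.ord).cof ≤ 2 ^ ν) :
    ∃ c : Ordinal → Ordinal → Ordinal,
      (∀ α β : Ordinal, α < β → β < κ.ord → c α β < θ.ord) ∧
      ∀ B : Ordinal → Set Ordinal,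
        (∀ τ < θ.ord, B τ ⊆ Set.Iio κ.ord ∧ ∀ α < κ.ord, ∃ β ∈ B τ, α ≤ β) →
        ∃ η < ν.ord, ∀ τ < θ.ord, ∀ α < κ.ord,
          ∃ β ∈ B τ, η < β ∧ α ≤ β ∧ c η β = τ := by
  have hθν : θ < ν := (cantor θ).trans_le <|
    (power_le_power_right ((natCast_lt_aleph0 (n := 2)).le.trans hν)).trans_eq hpow
  have hνκ : ν.ord < κ.ord := ord_lt_ord.2 (h1.trans_le (cof_ord_le κ))
  obtain ⟨X, π, hX, hπ⟩ := exists_hasBoundedFibres (o := κ.ord) (hνκ.trans_le' zero_le).ne'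
  obtain ⟨F, hF⟩ := engelking_karlowicz (T := θ.ord.ToType) (W := ν.ord.ToType) (X := X)
    (by simpa) (by simpa) (by simpa) (by simpa [hX])
  refine ⟨ekColouring F π, fun _ _ _ _ => ekColouring_lt (aleph0_pos.trans_le hθ).ne' ..,
    fun B hB => ?_⟩
  have hstep : ∀ α < κ.ord, ∃ w : ν.ord.ToType, ∀ τ < θ.ord,
      ∃ β ∈ B τ, (w : Ordinal) < β ∧ α ≤ β ∧ ekColouring F π w β = τ := by
    intro α hα
    obtain ⟨s, hs, hinj⟩ := hπ.exists_injective_comp (T := θ.ord.ToType) (B := fun t => B t)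
      (by simpa using hθν.trans h1) (fun t => hB _ (ToType.toOrd t).2) (max_lt hα hνκ)
    obtain ⟨w, hw⟩ := hF _ hinj
    refine ⟨w, fun τ hτ => ?_⟩
    obtain ⟨hsB, hsα⟩ := hs (ToType.mk ⟨τ, hτ⟩)
    refine ⟨_, by simpa using hsB, ((ToType.toOrd w).2.trans_le (le_max_right _ _)).trans_le hsα,
      (le_max_left _ _).trans hsα, ?_⟩
    rw [ekColouring_toOrd]
    simpa using congrArg (fun t : θ.ord.ToType => (t : Ordinal)) (hw (ToType.mk ⟨τ, hτ⟩))
  obtain ⟨w, hw⟩ := exists_forall_of_forall_exists (by simpa) (fun w α α' hαα' h τ hτ =>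
    (h τ hτ).imp fun β ⟨hβB, hwβ, hαβ, hcβ⟩ => ⟨hβB, hwβ, hαα'.trans hαβ, hcβ⟩) hstep
  exact ⟨w, (ToType.toOrd w).2, fun τ hτ α hα => hw α hα τ hτ⟩

theorem stmt_12 (θ ν κ : Cardinal) (hθ : ℵ₀ ≤ θ) (hν : ℵ₀ ≤ ν) (hκ : ℵ₀ ≤ κ)
    (hpow : ν ^ θ = ν) (h1 : ν < (κ.ord).cof) (h2 : (κ.ord).cof ≤ 2 ^ ν) :
    ∃ c : Ordinal → Ordinal → Ordinal,
      (∀ α β : Ordinal, α < β → β < κ.ord → c α β < θ.ord) ∧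
      ∀ B : Ordinal → Set Ordinal,
        (∀ τ < θ.ord, B τ ⊆ Set.Iio κ.ord ∧ ∀ α < κ.ord, ∃ β ∈ B τ, α ≤ β) →
        ∃ η < ν.ord, ∀ τ < θ.ord, ∀ α < κ.ord,
          ∃ β ∈ B τ, η < β ∧ α ≤ β ∧ c η β = τ :=
  stmt_12_general θ ν κ hθ hν hpow h1 h2
end

section
/- Suppose ν = ν^θ < κ ≤ 2^ν for infinite cardinals, and cf(κ) ≥ θ. Then there exists a colouring c : [κ]² → θ such that for every cofinal B ⊆ κ there exists η < ν with c[{η} ⊛ B] = θ. -/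
/-!
Fix an injection `F : κ → (ν → 2)`. Since `ν ^ θ = ν`, every `η < ν` codes a pair `(g, e)` with
`g : θ → ν` and `e : θ → (θ → 2)`; colour `(η, β)` by an `s` with `e s = F β ∘ g`, i.e. by the
position of the trace of `F β` along `g` in the table `e`. As `cf κ ≥ θ`, a cofinal `B` has `θ`
distinct elements `β_s` above `ν`. Pairing `θ ≃ θ × θ`, choose `g` so that it meets, for all
`s ≠ s'`, a point where `F β_s` and `F β_s'` differ; then the traces `e s := F β_s ∘ g` are
distinct, and the `η` coding `(g, e)` gives each `β_s` the colour `s`.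
-/

open Cardinal Ordinal Set

open Function

section TraceColouring

variable {T V W K : Type*}

theorem exists_injective_comp_of_surjective_prod [Nonempty V] {f : T → V → W} (hf : Injective f)
    {p : T → T × T} (hp : Surjective p) : ∃ g : T → V, Injective fun s ↦ f s ∘ g := by
  have hsep : ∀ u, ∃ v, (p u).1 ≠ (p u).2 → f (p u).1 v ≠ f (p u).2 v := by
    intro u
    by_cases h : f (p u).1 = f (p u).2
    · exact ⟨Classical.arbitrary V, fun hne ↦ (hne (hf h)).elim⟩
    · obtain ⟨v, hv⟩ := ne_iff.mp h
      exact ⟨v, fun _ ↦ hv⟩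
  choose g hg using hsep
  refine ⟨g, fun s s' hss' ↦ by_contra fun hne ↦ ?_⟩
  obtain ⟨u, hu⟩ := hp (s, s')
  have hgu := hg u
  rw [hu] at hgu
  exact hgu hne (congrFun hss' u)

noncomputable def traceColouring [Nonempty T] (F : K → V → W) (dec : V → (T → V) × (T → T → W))
    (η : V) (β : K) : T :=
  Classical.epsilon fun s ↦ (dec η).2 s = F β ∘ (dec η).1

theorem exists_traceColouring_eq [Nonempty T] [Nonempty V] {F : K → V → W} (hF : Injective F)
    {dec : V → (T → V) × (T → T → W)} (hdec : Surjective dec) {p : T → T × T}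
    (hp : Surjective p) {b : T → K} (hb : Injective b) :
    ∃ η, ∀ s, traceColouring F dec η (b s) = s := by
  obtain ⟨g, hg⟩ := exists_injective_comp_of_surjective_prod (hF.comp hb) hp
  obtain ⟨η, hη⟩ := hdec (g, fun s ↦ F (b s) ∘ g)
  refine ⟨η, fun s ↦ hg ?_⟩
  have hspec := Classical.epsilon_spec (p := fun t ↦ (dec η).2 t = F (b s) ∘ (dec η).1)
    ⟨s, by simp [hη]⟩
  simpa [traceColouring, hη] using hspec

end TraceColouring

theorem exists_surjective_prod_self {α : Type*} (h : ℵ₀ ≤ #α) : ∃ p : α → α × α, Surjective p := by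
  obtain ⟨e⟩ : Nonempty (α ≃ α × α) := by
    rw [← Cardinal.eq, mk_prod, Cardinal.lift_id, mul_eq_self h]
  exact ⟨e, e.surjective⟩

theorem exists_surjective_of_power_eq_self {T V : Type u} (hT : ℵ₀ ≤ #T) (hV : ℵ₀ ≤ #V)
    (hpow : #V ^ #T = #V) : ∃ dec : V → (T → V) × (T → T → Bool), Surjective dec := by
  have : Nonempty V := mk_ne_zero_iff.mp (aleph0_pos.trans_le hV).ne'
  refine exists_surjective_iff.mpr ⟨inferInstance, ?_⟩
  rw [← le_def]
  calc #((T → V) × (T → T → Bool)) = #V ^ #T * 2 ^ #T := by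
        simp [← power_mul, mul_eq_self hT]
    _ ≤ #V * #V := by
        rw [hpow]
        gcongr
        calc (2 : Cardinal) ^ #T ≤ #V ^ #T :=
              power_le_power_right ((natCast_lt_aleph0 (n := 2)).le.trans hV)
          _ = #V := hpow
    _ = #V := mul_eq_self hV

namespace Ordinal

theorem lift_cof_le_mk_of_forall_exists_le {a : Ordinal.{u}} {s : Set Ordinal.{u}}
    (hs : s ⊆ Iio a) (hcof : ∀ α < a, ∃ β ∈ s, α ≤ β) : (lift.{u + 1} a).cof ≤ #s := by
  by_contra! hlt
  have hsup := sSup_add_one_lt_of_lt_cof hlt hs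
  obtain ⟨β, hβ, hle⟩ := hcof _ hsup
  have hbdd : BddAbove ((· + 1) '' s) := ⟨a, by
    rintro _ ⟨γ, hγ, rfl⟩
    exact Order.add_one_le_of_lt (hs hγ)⟩
  have hβsup := le_csSup hbdd (mem_image_of_mem (· + 1) hβ)
  exact (Order.lt_add_one_iff.mpr le_rfl).not_ge (hβsup.trans hle)

theorem lift_cof_le_mk_inter_Ici {a b : Ordinal.{u}} {s : Set Ordinal.{u}} (hb : b < a)
    (hs : s ⊆ Iio a) (hcof : ∀ α < a, ∃ β ∈ s, α ≤ β) :
    Cardinal.lift.{u + 1} a.cof ≤ #(s ∩ Ici b : Set Ordinal) := by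
  rw [lift_cof]
  refine lift_cof_le_mk_of_forall_exists_le (inter_subset_left.trans hs) fun α hα ↦ ?_
  obtain ⟨β, hβ, hle⟩ := hcof _ (max_lt hα hb)
  exact ⟨β, ⟨hβ, le_of_max_le_right hle⟩, le_of_max_le_left hle⟩

end Ordinal

theorem stmt_13_general (θ ν κ : Cardinal) (hθ : ℵ₀ ≤ θ) (hν : ℵ₀ ≤ ν)
    (hpow : ν ^ θ = ν) (h1 : ν < κ) (h2 : κ ≤ 2 ^ ν) (hcf : θ ≤ (κ.ord).cof) :
    ∃ c : Ordinal → Ordinal → Ordinal,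
      (∀ α β : Ordinal, α < β → β < κ.ord → c α β < θ.ord) ∧
      ∀ B : Set Ordinal, B ⊆ Set.Iio κ.ord → (∀ α < κ.ord, ∃ β ∈ B, α ≤ β) →
        ∃ η < ν.ord, ∀ τ < θ.ord, ∃ β ∈ B, η < β ∧ c η β = τ := by
  have hθ0 : 0 < θ.ord := by simpa using aleph0_pos.trans_le hθ
  have : Nonempty (Iio θ.ord) := ⟨⟨0, hθ0⟩⟩
  have : Nonempty (Iio ν.ord) := ⟨⟨0, by simpa using aleph0_pos.trans_le hν⟩⟩
  obtain ⟨F⟩ : Nonempty (Iio κ.ord ↪ (Iio ν.ord → Bool)) := by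
    rw [← le_def, mk_arrow]
    simpa [← lift_two_power, -lift_power] using h2
  obtain ⟨dec, hdec⟩ := exists_surjective_of_power_eq_self (T := Iio θ.ord) (V := Iio ν.ord)
    (by simpa using hθ) (by simpa using hν) (by simp [← lift_power, hpow])
  obtain ⟨p, hp⟩ := exists_surjective_prod_self (α := Iio θ.ord) (by simpa using hθ)
  refine ⟨fun η β ↦ if h : η < ν.ord ∧ β < κ.ord then
      (traceColouring F dec ⟨η, h.1⟩ ⟨β, h.2⟩ : Iio θ.ord) else 0,
    fun α β _ _ ↦ ?_, fun B hB hcof ↦ ?_⟩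
  · dsimp only
    split_ifs
    exacts [Subtype.prop _, hθ0]
  obtain ⟨b⟩ : Nonempty (Iio θ.ord ↪ ↥(B ∩ Ici ν.ord)) := by
    rw [← le_def]
    simpa using (Cardinal.lift_le.mpr hcf).trans
      (lift_cof_le_mk_inter_Ici (ord_lt_ord.mpr h1) hB hcof)
  obtain ⟨η, hη⟩ := exists_traceColouring_eq F.injective hdec hp
    ((inclusion_injective (inter_subset_left.trans hB)).comp b.injective)
  refine ⟨η, η.2, fun τ hτ ↦ ⟨b ⟨τ, hτ⟩, (b _).2.1, η.2.trans_le (b _).2.2, ?_⟩⟩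
  dsimp only
  rw [dif_pos ⟨η.2, hB (b _).2.1⟩]
  exact congrArg Subtype.val (hη _)

theorem stmt_13 (θ ν κ : Cardinal) (hθ : ℵ₀ ≤ θ) (hν : ℵ₀ ≤ ν) (hκ : ℵ₀ ≤ κ)
    (hpow : ν ^ θ = ν) (h1 : ν < κ) (h2 : κ ≤ 2 ^ ν) (hcf : θ ≤ (κ.ord).cof) :
    ∃ c : Ordinal → Ordinal → Ordinal,
      (∀ α β : Ordinal, α < β → β < κ.ord → c α β < θ.ord) ∧
      ∀ B : Set Ordinal, B ⊆ Set.Iio κ.ord → (∀ α < κ.ord, ∃ β ∈ B, α ≤ β) →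
        ∃ η < ν.ord, ∀ τ < θ.ord, ∃ β ∈ B, η < β ∧ c η β = τ :=
  stmt_13_general θ ν κ hθ hν hpow h1 h2 hcf
end

section
/- Let θ be an infinite regular cardinal. If there exists a strictly ⊆*-decreasing sequence ⟨Y_α : α < κ⟩ of sets in [θ]^θ, then there exists an almost-disjoint family of size κ in [θ]^θ, i.e., a family {X_α : α < κ} ⊆ [θ]^θ with |X_α ∩ X_β| < θ for all α < β < κ. -/
open Cardinal Ordinal Set

theorem stmt_14 (θ κ : Cardinal.{0}) (hθ : ℵ₀ ≤ θ) (hθreg : θ.IsRegular)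
    (Y : Ordinal.{0} → Set Ordinal.{0})
    (hY : ∀ α < κ.ord, Y α ⊆ Set.Iio θ.ord ∧
      Cardinal.mk ↥(Y α) = Cardinal.lift.{1,0} θ)
    (hdec : ∀ α β : Ordinal, α < β → β < κ.ord →
      Cardinal.mk ↥(Y β \ Y α) < Cardinal.lift.{1,0} θ ∧
      Cardinal.mk ↥(Y α \ Y β) = Cardinal.lift.{1,0} θ) :
    ∃ X : Ordinal.{0} → Set Ordinal.{0},
      (∀ α < κ.ord, X α ⊆ Set.Iio θ.ord ∧
        Cardinal.mk ↥(X α) = Cardinal.lift.{1,0} θ) ∧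
      ∀ α β : Ordinal, α < β → β < κ.ord →
        Cardinal.mk ↥(X α ∩ X β) < Cardinal.lift.{1,0} θ := by
  have hθpos : (0 : Cardinal) < Cardinal.lift.{1,0} θ := by
    have : (0:Cardinal) < θ := lt_of_lt_of_le aleph0_pos hθ
    simpa using this
  refine ⟨fun α => if α + 1 < κ.ord then Y α \ Y (α + 1) else Y α, ?_, ?_⟩
  · intro α hα
    by_cases h : α + 1 < κ.ord
    · simp only [if_pos h]
      exact ⟨fun x hx => (hY α hα).1 hx.1, (hdec α (α + 1) (lt_add_one α) h).2⟩
    · simp only [if_neg h]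
      exact hY α hα
  · intro α β hαβ hβ
    have h1 : α + 1 ≤ β := by
      rw [Ordinal.add_one_eq_succ]
      exact Order.succ_le_of_lt hαβ
    have h2 : α + 1 < κ.ord := lt_of_le_of_lt h1 hβ
    have hsub : (if α + 1 < κ.ord then Y α \ Y (α + 1) else Y α) ∩
        (if β + 1 < κ.ord then Y β \ Y (β + 1) else Y β) ⊆ Y β \ Y (α + 1) := by
      rw [if_pos h2]
      intro x hx
      obtain ⟨hx1, hx2⟩ := hx
      refine ⟨?_, hx1.2⟩
      split at hx2
      · exact hx2.1
      · exact hx2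
    have hle := mk_le_mk_of_subset hsub
    rcases eq_or_lt_of_le h1 with h | h
    · subst h
      have : Y (α + 1) \ Y (α + 1) = (∅ : Set Ordinal) := by simp
      rw [this] at hle
      simpa using lt_of_le_of_lt (by simpa using hle) hθpos
    · exact lt_of_le_of_lt hle (hdec (α + 1) β h hβ).1
end

section
/- Suppose λ^{<θ} < λ^θ with θ an infinite regular cardinal. Then there exist families 𝒳 and 𝒴 of sets of ordinals such that: |𝒳| = λ^θ; (𝒴, ⊆) has order type θ; for all distinct x, x′ ∈ 𝒳 there is y ∈ 𝒴 with x ∩ x′ ⊆ y; for every (x,y) ∈ 𝒳 × 𝒴, x \ y ≠ ∅; and for every y ∈ 𝒴, the set {min(x \ y) : x ∈ 𝒳} has size at most λ^{<θ}. -/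
/-! Let `L` have size `λ` and code the tree `T = {}^{<θ} L` injectively by ordinals. A branch
`f : θ → L` gives the set `x_f` of codes of its restrictions `f ↾ i`, and `Y_τ` is the set of
codes of the nodes of level `< τ`. Distinct branches share only restrictions below the first
point where they differ, so `x_f ∩ x_g` lies in some `Y_τ`; the restriction `f ↾ τ` witnesses
`x_f \ Y_τ ≠ ∅`; and every `min (x_f \ Y_τ)` is the code of a node, of which there are at most
`θ · λ^{<θ} = λ^{<θ}`. -/

open Cardinal Ordinal Set

universe u v w

namespace Cardinal

theorem one_lt_of_powerlt_lt_power {a b : Cardinal} (hb : b ≠ 0) (h : a ^< b < a ^ b) :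
    1 < a := by
  by_contra! ha
  have h1 : 1 ≤ a ^< b := by simpa using le_powerlt a (pos_iff_ne_zero.2 hb)
  exact (h1.trans_lt h).not_ge ((power_le_power_right ha).trans one_power.le)

theorem le_powerlt_self {a : Cardinal} (ha : 1 < a) (b : Cardinal) : b ≤ a ^< b := by
  by_contra! h
  have : a ^< b < a ^< b := calc
    a ^< b < 2 ^ (a ^< b) := cantor _
    _ ≤ a ^ (a ^< b) := power_le_power_right (two_le_iff_one_lt.2 ha)
    _ ≤ a ^< b := le_powerlt a h
  exact this.false

end Cardinal

/-- The tree `{}^{<K} L`. -/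
abbrev Node (K L : Type*) [Preorder K] := Σ i : K, (Iio i → L)

namespace Node

variable {K L : Type*} [Preorder K]

def restrict (f : K → L) (i : K) : Node K L := ⟨i, fun j => f j⟩

theorem restrict_eq_restrict_iff {f g : K → L} {i i' : K} :
    restrict f i = restrict g i' ↔ i = i' ∧ ∀ j < i, f j = g j := by
  constructor
  · intro h
    obtain ⟨rfl, hfg⟩ := Sigma.mk.inj_iff.mp h
    exact ⟨rfl, fun j hj => congrFun (eq_of_heq hfg) ⟨j, hj⟩⟩
  · rintro ⟨rfl, hfg⟩
    exact Sigma.ext rfl (heq_of_eq (funext fun j => hfg j j.2))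

theorem mk_le_mul_powerlt {K L : Type u} [Preorder K] {κ : Cardinal.{u}}
    (hκ : ∀ i : K, #(Iio i) < κ) : #(Node K L) ≤ #K * #L ^< κ := calc
  #(Node K L) = sum fun i : K => #L ^ #(Iio i) := by simp only [mk_sigma, power_def]
  _ ≤ sum fun _ : K => #L ^< κ := sum_le_sum _ _ fun i => le_powerlt _ (hκ i)
  _ = #K * #L ^< κ := sum_const' _ _

theorem mk_toType_ord_le_powerlt {θ : Cardinal.{u}} {L : Type u} (hθ : ℵ₀ ≤ θ)
    (hL : 1 < #L) :
    #(Node θ.ord.ToType L) ≤ #L ^< θ := by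
  have hK : #θ.ord.ToType = θ := by rw [mk_toType, card_ord]
  calc #(Node θ.ord.ToType L)
      ≤ θ * #L ^< θ := by
        have := mk_le_mul_powerlt (L := L) fun i => mk_Iio_lt i (by rw [hK, type_toType])
        rwa [hK] at this
    _ ≤ #L ^< θ * #L ^< θ := mul_le_mul_left (le_powerlt_self hL θ) _
    _ = #L ^< θ := mul_eq_self (hθ.trans (le_powerlt_self hL θ))

section Tree

variable {K : Type u} {L : Type v} {α : Type w} [Preorder K] (e : Node K L ↪ α)

def branchSet (f : K → L) : Set α := range fun i => e (restrict f i)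

theorem branchSet_injective [NoMaxOrder K] : Function.Injective (branchSet e) := by
  intro f g hfg
  funext j
  obtain ⟨i, hji⟩ := exists_gt j
  obtain ⟨i', hi'⟩ : e (restrict f i) ∈ branchSet e g := hfg ▸ mem_range_self i
  obtain ⟨rfl, hgf⟩ := restrict_eq_restrict_iff.mp (e.injective hi')
  exact (hgf j hji).symm

end Tree

section WellOrderedTree

variable {K : Type u} {L : Type v} {α : Type w} [LinearOrder K] [WellFoundedLT K]
  (e : Node K L ↪ α)

def levelSet (τ : Ordinal.{u}) : Set α := e '' {t | typein (α := K) (· < ·) t.1 < τ}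

variable {e}

theorem apply_mem_levelSet_iff {t : Node K L} {τ : Ordinal} :
    e t ∈ levelSet e τ ↔ typein (α := K) (· < ·) t.1 < τ :=
  e.injective.mem_set_image

theorem levelSet_mono : Monotone (levelSet e) :=
  fun _ _ hστ => image_mono <| ofPred_subset_ofPred.2 fun _ ht => ht.trans_le hστ

theorem restrict_mem_branchSet_diff_levelSet (f : K → L) (i : K) :
    e (restrict f i) ∈ branchSet e f \ levelSet e (typein (α := K) (· < ·) i) :=
  ⟨mem_range_self i, apply_mem_levelSet_iff.not.2 (lt_irrefl _)⟩

theorem branchSet_diff_levelSet_nonempty (f : K → L) {τ : Ordinal} (hτ : τ < typeLT K) :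
    (branchSet e f \ levelSet e τ).Nonempty := by
  obtain ⟨i, rfl⟩ := typein_surj _ hτ
  exact ⟨_, restrict_mem_branchSet_diff_levelSet f i⟩

theorem levelSet_ssubset [Nonempty L] {σ τ : Ordinal} (hστ : σ < τ) (hσ : σ < typeLT K) :
    levelSet e σ ⊂ levelSet e τ := by
  obtain ⟨i, rfl⟩ := typein_surj _ hσ
  obtain ⟨-, hxσ⟩ := restrict_mem_branchSet_diff_levelSet (e := e) (Classical.arbitrary _) i
  exact (ssubset_iff_of_subset (levelSet_mono hστ.le)).2
    ⟨_, apply_mem_levelSet_iff.2 hστ, hxσ⟩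

theorem inter_branchSet_subset_levelSet {f g : K → L} {i : K} (hi : f i ≠ g i) :
    branchSet e f ∩ branchSet e g ⊆ levelSet e (Order.succ (typein (α := K) (· < ·) i)) := by
  rintro _ ⟨⟨j, rfl⟩, ⟨j', hj'⟩⟩
  obtain ⟨rfl, hgf⟩ := restrict_eq_restrict_iff.mp (e.injective hj')
  exact apply_mem_levelSet_iff.2 <| Order.lt_succ_iff.2 <|
    (typein_le_typein _).2 fun hij => hi (hgf i hij).symm

theorem sInf_diff_levelSet_mem_range [ConditionallyCompleteLinearOrder α] [WellFoundedLT α]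
    (f : K → L) {τ : Ordinal} (hτ : τ < typeLT K) :
    sInf (branchSet e f \ levelSet e τ) ∈ range e :=
  range_comp_subset_range _ _ (csInf_mem (branchSet_diff_levelSet_nonempty f hτ)).1

end WellOrderedTree

end Node

open Node

theorem stmt_16_general (θ lam : Cardinal.{0}) (hθ : ℵ₀ ≤ θ)
    (hpow : lam ^< θ < lam ^ θ) :
    ∃ (𝒳 : Set (Set Ordinal.{0})) (Y : Ordinal.{0} → Set Ordinal.{0}),
      Cardinal.mk ↥𝒳 = Cardinal.lift.{1,0} (lam ^ θ) ∧
      (∀ σ τ : Ordinal, σ < τ → τ < θ.ord → Y σ ⊂ Y τ) ∧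
      (∀ x ∈ 𝒳, ∀ x' ∈ 𝒳, x ≠ x' → ∃ τ < θ.ord, x ∩ x' ⊆ Y τ) ∧
      (∀ x ∈ 𝒳, ∀ τ < θ.ord, (x \ Y τ).Nonempty) ∧
      (∀ τ < θ.ord,
        Cardinal.mk ↥{o : Ordinal | ∃ x ∈ 𝒳, o = sInf (x \ Y τ)} ≤
          Cardinal.lift.{1,0} (lam ^< θ)) := by
  have hlam : 1 < lam := one_lt_of_powerlt_lt_power (aleph0_pos.trans_le hθ).ne' hpow
  have : NoMaxOrder θ.ord.ToType := noMaxOrder hθ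
  have : Nonempty lam.out := by
    rw [← mk_ne_zero_iff, mk_out]
    exact (zero_lt_one.trans hlam).ne'
  let e : Node θ.ord.ToType lam.out ↪ Ordinal.{0} :=
    embeddingToCardinal.trans ⟨ord, ord_injective⟩
  have hθK : θ.ord = typeLT θ.ord.ToType := (type_toType _).symm
  refine ⟨range (branchSet e), levelSet e, ?_, ?_, ?_, ?_, ?_⟩
  · rw [← Cardinal.lift_uzero #(range _), mk_range_eq_of_injective (branchSet_injective e),
      ← power_def, mk_toType, card_ord, mk_out]
  · exact fun σ τ hστ hτ => levelSet_ssubset hστ (hθK ▸ hστ.trans hτ)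
  · rintro _ ⟨f, rfl⟩ _ ⟨g, rfl⟩ hfg
    obtain ⟨i, hi⟩ := Function.ne_iff.mp (ne_of_apply_ne _ hfg)
    exact ⟨_, (isSuccLimit_ord hθ).succ_lt (typein_lt_self i),
      inter_branchSet_subset_levelSet hi⟩
  · rintro _ ⟨f, rfl⟩ τ hτ
    exact branchSet_diff_levelSet_nonempty f (hθK ▸ hτ)
  · intro τ hτ
    calc _ ≤ #(range e) := mk_le_mk_of_subset <| by
          rintro _ ⟨_, ⟨f, rfl⟩, rfl⟩
          exact sInf_diff_levelSet_mem_range f (hθK ▸ hτ)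
      _ = lift #(Node θ.ord.ToType lam.out) :=
          (Cardinal.lift_uzero _).symm.trans (mk_range_eq_of_injective e.injective)
      _ ≤ lift (lam ^< θ) := lift_le.2 <| by
          simpa only [mk_out] using mk_toType_ord_le_powerlt (L := lam.out) hθ (by rwa [mk_out])

theorem stmt_16 (θ lam : Cardinal.{0}) (hθ : ℵ₀ ≤ θ) (hθreg : θ.IsRegular)
    (hpow : lam ^< θ < lam ^ θ) :
    ∃ (𝒳 : Set (Set Ordinal.{0})) (Y : Ordinal.{0} → Set Ordinal.{0}),
      Cardinal.mk ↥𝒳 = Cardinal.lift.{1,0} (lam ^ θ) ∧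
      (∀ σ τ : Ordinal, σ < τ → τ < θ.ord → Y σ ⊂ Y τ) ∧
      (∀ x ∈ 𝒳, ∀ x' ∈ 𝒳, x ≠ x' → ∃ τ < θ.ord, x ∩ x' ⊆ Y τ) ∧
      (∀ x ∈ 𝒳, ∀ τ < θ.ord, (x \ Y τ).Nonempty) ∧
      (∀ τ < θ.ord,
        Cardinal.mk ↥{o : Ordinal | ∃ x ∈ 𝒳, o = sInf (x \ Y τ)} ≤
          Cardinal.lift.{1,0} (lam ^< θ)) :=
  stmt_16_general θ lam hθ hpow
end

section
/- Suppose θ is an infinite regular cardinal and (T, <_T) is a tree of height θ with at least κ many θ-branches such that every level T_γ (γ < θ) has size less than μ. Then κ ∈ ad(μ, θ): there exist families 𝒳, 𝒴 with |𝒳| = κ, (𝒴,⊆) of order type θ, such that any two distinct x, x′ ∈ 𝒳 satisfy x ∩ x′ ⊆ y for some y ∈ 𝒴, x \ y ≠ ∅ for every (x,y) ∈ 𝒳 × 𝒴, and {min(x \ y) : x ∈ 𝒳} has size less than μ for every y ∈ 𝒴. -/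
/-!
Fix an injection `f` of `T` into the ordinals that is strictly increasing across levels, and take
`𝒳 = {f[b] : b a branch}` and `Y τ = f[T↾τ]`. Two distinct branches of a tree of height `θ` cannot
share nodes at cofinally many levels, since a common node at level `≥ γ` forces both branches to
agree at level `γ`; so `f[b] ∩ f[b']` lies in some `Y τ`. Since `f` respects levels, the least
element of `f[b] \ Y τ` is the image of the node of `b` at level `τ`, so these minima range over
the image of the level `T_τ`, which has size `< μ`.
-/

open Cardinal Ordinal Set Function

universe u

theorem exists_injective_lt_of_lvl_lt {T : Type u} (lvl : T → Ordinal.{u}) :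
    ∃ f : T → Ordinal.{u}, Injective f ∧ ∀ s t, lvl s < lvl t → f s < f t := by
  let r := WellOrderingRel (α := T)
  let M := type r
  have hfl : ∀ s t, lvl s < lvl t → M * lvl s + typein r s < M * lvl t + typein r t :=
    fun s t h => calc
      M * lvl s + typein r s < M * lvl s + M := (add_lt_add_iff_left _).2 (typein_lt_type r s)
      _ = M * Order.succ (lvl s) := (mul_succ M (lvl s)).symm
      _ ≤ M * lvl t := mul_le_mul_right (Order.succ_le_of_lt h) M
      _ ≤ M * lvl t + typein r t := le_self_add
  refine ⟨fun t => M * lvl t + typein r t, fun s t h => ?_, hfl⟩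
  rcases lt_trichotomy (lvl s) (lvl t) with hlt | heq | hgt
  · exact absurd h (hfl s t hlt).ne
  · simp only [heq] at h
    exact typein_injective r (add_left_cancel h)
  · exact absurd h (hfl t s hgt).ne'

section Tree

variable {T ι : Type*} [LinearOrder ι] {tlt : T → T → Prop} {lvl : T → ι}

theorem isChain_of_rel_or_rel_or_eq {B : Set T} (h : ∀ s ∈ B, ∀ t ∈ B, tlt s t ∨ tlt t s ∨ s = t) :
    IsChain tlt B :=
  fun s hs t ht hne => (h s hs t ht).imp_right (·.resolve_right hne)

variable (hmono : ∀ s t, tlt s t → lvl s < lvl t)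
include hmono

theorem IsChain.eq_of_lvl_eq {B : Set T} (hB : IsChain tlt B) {s t : T} (hs : s ∈ B)
    (ht : t ∈ B) (h : lvl s = lvl t) : s = t := by
  by_contra hne
  rcases hB hs ht hne with h' | h'
  · exact (hmono _ _ h').ne h
  · exact (hmono _ _ h').ne' h

theorem IsChain.rel_of_lvl_lt {B : Set T} (hB : IsChain tlt B) {s t : T} (hs : s ∈ B)
    (ht : t ∈ B) (h : lvl s < lvl t) : tlt s t :=
  (hB hs ht (by rintro rfl; exact h.false)).resolve_right fun h' => (hmono _ _ h').asymm h

theorem IsChain.eq_of_lvl_eq_of_common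
    (hpred : ∀ s s' t, tlt s t → tlt s' t → tlt s s' ∨ tlt s' s ∨ s = s')
    {B C : Set T} (hB : IsChain tlt B) (hC : IsChain tlt C) {s s' t : T} (hs : s ∈ B)
    (hs' : s' ∈ C) (hss' : lvl s = lvl s') (htB : t ∈ B) (htC : t ∈ C) (hst : lvl s ≤ lvl t) :
    s = s' := by
  rcases hst.lt_or_eq with hlt | heq
  · have h := hB.rel_of_lvl_lt hmono hs htB hlt
    have h' := hC.rel_of_lvl_lt hmono hs' htC (hss' ▸ hlt)
    rcases hpred _ _ _ h h' with h'' | h'' | h''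
    · exact absurd hss' (hmono _ _ h'').ne
    · exact absurd hss' (hmono _ _ h'').ne'
    · exact h''
  · rw [hB.eq_of_lvl_eq hmono hs htB heq, hC.eq_of_lvl_eq hmono hs' htC (hss' ▸ heq)]

theorem IsChain.subset_of_frequently_mem_inter
    (hpred : ∀ s s' t, tlt s t → tlt s' t → tlt s s' ∨ tlt s' s ∨ s = s')
    {B C : Set T} (hB : IsChain tlt B) (hC : IsChain tlt C) {o : ι}
    (hBo : ∀ s ∈ B, lvl s < o) (hCfull : ∀ γ < o, ∃ t ∈ C, lvl t = γ)
    (hfreq : ∀ τ < o, ∃ t ∈ B ∩ C, τ ≤ lvl t) : B ⊆ C := by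
  intro s hs
  obtain ⟨s', hs', hs's⟩ := hCfull _ (hBo s hs)
  obtain ⟨t, ⟨htB, htC⟩, hst⟩ := hfreq _ (hBo s hs)
  rwa [hB.eq_of_lvl_eq_of_common hmono hpred hC hs hs' hs's.symm htB htC hst]

variable {α : Type*} {f : T → α}

theorem IsChain.exists_image_inter_subset_of_ne
    (hpred : ∀ s s' t, tlt s t → tlt s' t → tlt s s' ∨ tlt s' s ∨ s = s')
    (hf : Injective f) {o : ι} (hlvl : ∀ t, lvl t < o)
    {B C : Set T} (hB : IsChain tlt B) (hC : IsChain tlt C)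
    (hBfull : ∀ γ < o, ∃ t ∈ B, lvl t = γ) (hCfull : ∀ γ < o, ∃ t ∈ C, lvl t = γ)
    (hne : B ≠ C) : ∃ τ < o, f '' B ∩ f '' C ⊆ f '' {t | lvl t < τ} := by
  simp only [← image_inter hf, image_subset_image_iff hf]
  by_contra! hfreq
  have hfreq' : ∀ τ < o, ∃ t ∈ B ∩ C, τ ≤ lvl t := fun τ hτ => by
    simpa [not_subset] using hfreq τ hτ
  refine hne (Subset.antisymm ?_ ?_)
  · exact hB.subset_of_frequently_mem_inter hmono hpred hC (fun s _ => hlvl s) hCfull hfreq'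
  · refine hC.subset_of_frequently_mem_inter hmono hpred hB (fun s _ => hlvl s) hBfull ?_
    simpa only [inter_comm C B] using hfreq'

theorem IsChain.isLeast_image_diff [Preorder α] (hf : Injective f)
    (hfl : ∀ s t, lvl s < lvl t → f s < f t) {B : Set T} (hB : IsChain tlt B) {t : T}
    (ht : t ∈ B) : IsLeast (f '' B \ f '' {s | lvl s < lvl t}) (f t) := by
  refine ⟨⟨mem_image_of_mem f ht, fun h => (hf.mem_set_image.1 h).false⟩, ?_⟩
  rintro _ ⟨⟨s, hs, rfl⟩, hsτ⟩
  rw [hf.mem_set_image] at hsτ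
  rcases (_root_.not_lt.1 hsτ).lt_or_eq with h | h
  · exact (hfl _ _ h).le
  · rw [hB.eq_of_lvl_eq hmono ht hs h]

end Tree

theorem image_lvl_lt_ssubset {T ι α : Type*} [Preorder ι] {lvl : T → ι} {f : T → α}
    (hf : Injective f) {o : ι} (hheight : ∀ γ < o, ∃ t, lvl t = γ) {σ τ : ι} (hστ : σ < τ)
    (hτ : τ < o) : f '' {t | lvl t < σ} ⊂ f '' {t | lvl t < τ} := by
  obtain ⟨t, rfl⟩ := hheight σ (hστ.trans hτ)
  refine (ssubset_iff_of_subset (image_mono fun s hs => lt_trans hs hστ)).2 ⟨f t, ?_, ?_⟩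
  · exact mem_image_of_mem f hστ
  · exact fun h => lt_irrefl (lvl t) (hf.mem_set_image.1 h)

theorem stmt_17_general (θ μ κ : Cardinal.{0})
    (T : Type) (tlt : T → T → Prop) (lvl : T → Ordinal.{0})
    (hlvl : ∀ t, lvl t < θ.ord)
    (hmono : ∀ s t, tlt s t → lvl s < lvl t)
    (hpred : ∀ s s' t, tlt s t → tlt s' t → (tlt s s' ∨ tlt s' s ∨ s = s'))
    (hheight : ∀ γ < θ.ord, ∃ t, lvl t = γ)
    (hlevel : ∀ γ < θ.ord, Cardinal.mk {t : T // lvl t = γ} < μ)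
    (b : Ordinal → Set T)
    (hbchain : ∀ β < κ.ord, ∀ s ∈ b β, ∀ t ∈ b β, tlt s t ∨ tlt t s ∨ s = t)
    (hbfull : ∀ β < κ.ord, ∀ γ < θ.ord, ∃ t ∈ b β, lvl t = γ)
    (hbinj : ∀ α β : Ordinal, α < β → β < κ.ord → b α ≠ b β) :
    ∃ (𝒳 : Set (Set Ordinal.{0})) (Y : Ordinal.{0} → Set Ordinal.{0}),
      Cardinal.mk ↥𝒳 = Cardinal.lift.{1,0} κ ∧
      (∀ σ τ : Ordinal, σ < τ → τ < θ.ord → Y σ ⊂ Y τ) ∧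
      (∀ x ∈ 𝒳, ∀ x' ∈ 𝒳, x ≠ x' → ∃ τ < θ.ord, x ∩ x' ⊆ Y τ) ∧
      (∀ x ∈ 𝒳, ∀ τ < θ.ord, (x \ Y τ).Nonempty) ∧
      (∀ τ < θ.ord,
        Cardinal.mk ↥{o : Ordinal | ∃ x ∈ 𝒳, o = sInf (x \ Y τ)} <
          Cardinal.lift.{1,0} μ) := by
  obtain ⟨f, hf, hfl⟩ := exists_injective_lt_of_lvl_lt lvl
  have hb : ∀ β < κ.ord, IsChain tlt (b β) :=
    fun β hβ => isChain_of_rel_or_rel_or_eq (hbchain β hβ)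
  have hbinj' : InjOn b (Iio κ.ord) := fun α hα β hβ h => by
    rcases lt_trichotomy α β with h' | rfl | h'
    exacts [absurd h (hbinj α β h' hβ), rfl, absurd h.symm (hbinj β α h' hα)]
  refine ⟨(fun β => f '' b β) '' Iio κ.ord, fun τ => f '' {t | lvl t < τ}, ?_,
    fun σ τ => image_lvl_lt_ssubset hf hheight, ?_, ?_, fun τ hτ => ?_⟩
  · rw [mk_image_eq_of_injOn (fun β => f '' b β) _ ((image_injective.2 hf).comp_injOn hbinj'),
      Cardinal.mk_Iio_ordinal, card_ord]
  · rintro _ ⟨α, hα, rfl⟩ _ ⟨β, hβ, rfl⟩ hne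
    exact (hb α hα).exists_image_inter_subset_of_ne hmono hpred hf hlvl (hb β hβ)
      (hbfull α hα) (hbfull β hβ) (fun h => hne (congrArg (f '' ·) h))
  · rintro _ ⟨β, hβ, rfl⟩ τ hτ
    obtain ⟨t, ht, rfl⟩ := hbfull β hβ τ hτ
    exact ⟨f t, ((hb β hβ).isLeast_image_diff hmono hf hfl ht).1⟩
  · have hsub : {o | ∃ x ∈ (fun β => f '' b β) '' Iio κ.ord, o = sInf (x \ f '' {t | lvl t < τ})}
        ⊆ f '' {t | lvl t = τ} := by
      rintro _ ⟨_, ⟨β, hβ, rfl⟩, rfl⟩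
      obtain ⟨t, ht, rfl⟩ := hbfull β hβ τ hτ
      rw [((hb β hβ).isLeast_image_diff hmono hf hfl ht).csInf_eq]
      exact mem_image_of_mem f rfl
    calc _ ≤ Cardinal.mk ↥(f '' {t | lvl t = τ}) := mk_le_mk_of_subset hsub
      _ = Cardinal.lift.{1,0} (Cardinal.mk ↥{t | lvl t = τ}) := by
          simpa using mk_image_eq_lift f {t | lvl t = τ} hf
      _ < Cardinal.lift.{1,0} μ := lift_lt.2 (hlevel τ hτ)

theorem stmt_17 (θ μ κ : Cardinal.{0}) (hθ : ℵ₀ ≤ θ) (hθreg : θ.IsRegular)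
    (T : Type) (tlt : T → T → Prop) (lvl : T → Ordinal.{0})
    (hlvl : ∀ t, lvl t < θ.ord)
    (hmono : ∀ s t, tlt s t → lvl s < lvl t)
    (hpred : ∀ s s' t, tlt s t → tlt s' t → (tlt s s' ∨ tlt s' s ∨ s = s'))
    (hheight : ∀ γ < θ.ord, ∃ t, lvl t = γ)
    (hlevel : ∀ γ < θ.ord, Cardinal.mk {t : T // lvl t = γ} < μ)
    (b : Ordinal → Set T)
    (hbchain : ∀ β < κ.ord, ∀ s ∈ b β, ∀ t ∈ b β, tlt s t ∨ tlt t s ∨ s = t)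
    (hbfull : ∀ β < κ.ord, ∀ γ < θ.ord, ∃ t ∈ b β, lvl t = γ)
    (hbinj : ∀ α β : Ordinal, α < β → β < κ.ord → b α ≠ b β) :
    ∃ (𝒳 : Set (Set Ordinal.{0})) (Y : Ordinal.{0} → Set Ordinal.{0}),
      Cardinal.mk ↥𝒳 = Cardinal.lift.{1,0} κ ∧
      (∀ σ τ : Ordinal, σ < τ → τ < θ.ord → Y σ ⊂ Y τ) ∧
      (∀ x ∈ 𝒳, ∀ x' ∈ 𝒳, x ≠ x' → ∃ τ < θ.ord, x ∩ x' ⊆ Y τ) ∧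
      (∀ x ∈ 𝒳, ∀ τ < θ.ord, (x \ Y τ).Nonempty) ∧
      (∀ τ < θ.ord,
        Cardinal.mk ↥{o : Ordinal | ∃ x ∈ 𝒳, o = sInf (x \ Y τ)} <
          Cardinal.lift.{1,0} μ) :=
  stmt_17_general θ μ κ T tlt lvl hlvl hmono hpred hheight hlevel b hbchain hbfull hbinj
end

section
/- Let κ be a regular uncountable cardinal, θ < κ a regular cardinal, and (T, <_T) a tree of height θ with at least κ many θ-branches all of whose levels have size less than κ. Then for every κ-complete ideal J over κ extending the bounded ideal and every B ∈ J⁺, there exists α ∈ B such that the set {ξ < θ : {β ∈ B : Δ(b_ᾱ, b_β̄) = ξ} ∈ J⁺} has order type θ, where ⟨b_β : β < κ⟩ enumerates θ-branches injectively and Δ(b, b′) denotes the level at which the branches b and b′ split. -/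
open Cardinal Ordinal Set

/-!
If the theorem failed, every `α ∈ B` would have its `J`-positive splitting levels bounded below
`θ`, since an unbounded subset of the regular cardinal `θ` has order type `θ`. By `κ`-completeness,
first a single bound `η < θ` and then a single node `t₀` of level `η` (levels have size `< κ`)
serve a `J`-positive set `A ⊆ B`. Fix `α ∈ A`. Every other `β ∈ A` also passes through `t₀`, so
it splits from `α` at some level `ξ > η`, where the splitting sets are `J`-small. Hence
`A ⊆ {α} ∪ ⋃_{η < ξ < θ} {β ∈ B | Δ(b α, b β) = ξ}` lies in `J`, a contradiction.
-/

theorem otp_eq_lift_ord_of_cofinal {θ : Cardinal.{0}} (hθ : θ.ord.cof = θ)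
    {S : Set Ordinal.{0}} (hS : S ⊆ Iio θ.ord) (hcof : ∀ η < θ.ord, ∃ ξ ∈ S, η ≤ ξ) :
    otp S = Ordinal.lift.{1} θ.ord := by
  refine le_antisymm ((type_mono hS).trans_eq (type_lt_Iio _)) ?_
  rw [Cardinal.lift_ord, Cardinal.ord_le, otp, card_type]
  have hcofinal : IsCofinal {x : Iio θ.ord | x.1 ∈ S} := fun x => by
    obtain ⟨ξ, hξ, hle⟩ := hcof x.1 x.2
    exact ⟨⟨ξ, hS hξ⟩, hξ, hle⟩
  calc Cardinal.lift.{1} θ = Order.cof (Iio θ.ord) := by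
        rw [Ordinal.cof_Iio, ← Ordinal.lift_cof, hθ]
    _ ≤ #{x : Iio θ.ord | x.1 ∈ S} := Order.cof_le hcofinal
    _ = #S := mk_congr
      ⟨fun x => ⟨x.1.1, x.2⟩, fun x => ⟨⟨x.1, hS x.2⟩, x.2⟩, fun _ => rfl, fun _ => rfl⟩

structure IsCompleteIdeal (κ : Cardinal.{0}) (J : Set (Set Ordinal.{0})) : Prop where
  mem_of_subset : ∀ A A' : Set Ordinal, A' ∈ J → A ⊆ A' → A ∈ J
  biUnion_mem : ∀ o < κ.ord, ∀ f : Ordinal → Set Ordinal,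
    (∀ i < o, f i ∈ J) → (⋃ i ∈ Iio o, f i) ∈ J
  Iio_mem : ∀ α < κ.ord, Iio α ∈ J

namespace IsCompleteIdeal

variable {κ : Cardinal.{0}} {J : Set (Set Ordinal.{0})} {A A₁ A₂ : Set Ordinal}

theorem empty_mem (hJ : IsCompleteIdeal κ J) (hκ : κ ≠ 0) : ∅ ∈ J :=
  hJ.mem_of_subset _ _ (hJ.Iio_mem 0 (ord_pos.2 (pos_iff_ne_zero.2 hκ))) (empty_subset _)

theorem nonempty_of_notMem (hJ : IsCompleteIdeal κ J) (hκ : κ ≠ 0) (hA : A ∉ J) :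
    A.Nonempty :=
  nonempty_iff_ne_empty.2 fun h => hA (h ▸ hJ.empty_mem hκ)

theorem singleton_mem (hJ : IsCompleteIdeal κ J) (hκ : ℵ₀ ≤ κ) {α : Ordinal} (hα : α < κ.ord) :
    {α} ∈ J :=
  hJ.mem_of_subset _ _ (hJ.Iio_mem _ ((isSuccLimit_ord hκ).succ_lt hα))
    (singleton_subset_iff.2 (Order.lt_succ α))

theorem union_mem (hJ : IsCompleteIdeal κ J) (hκ : 2 < κ) (h₁ : A₁ ∈ J) (h₂ : A₂ ∈ J) :
    A₁ ∪ A₂ ∈ J := by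
  have h2κ : (2 : Ordinal) < κ.ord := Cardinal.lt_ord.2 (by simpa using hκ)
  refine hJ.mem_of_subset _ _
    (hJ.biUnion_mem 2 h2κ (fun i => if i = 0 then A₁ else A₂) fun i _ => ?_) ?_
  · split_ifs
    exacts [h₁, h₂]
  · rintro α (hα | hα)
    · exact mem_biUnion (x := 0) (mem_Iio.2 two_pos) (by rwa [if_pos rfl])
    · exact mem_biUnion (x := 1) (mem_Iio.2 one_lt_two) (by rwa [if_neg one_ne_zero])

theorem exists_notMem_of_subset_biUnion (hJ : IsCompleteIdeal κ J) {o : Ordinal}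
    (ho : o < κ.ord) {F : Ordinal → Set Ordinal} (hA : A ∉ J) (hAF : A ⊆ ⋃ i ∈ Iio o, F i) :
    ∃ i < o, F i ∉ J := by
  by_contra! h
  exact hA (hJ.mem_of_subset _ _ (hJ.biUnion_mem o ho F h) hAF)

theorem exists_notMem_of_subset_iUnion (hJ : IsCompleteIdeal κ J) {X : Type} (hX : #X < κ)
    {F : X → Set Ordinal} (hA : A ∉ J) (hAF : A ⊆ ⋃ x, F x) : ∃ x, F x ∉ J := by
  obtain ⟨e⟩ : Nonempty (X ≃ (#X).ord.ToType) :=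
    Cardinal.eq.1 (by rw [mk_toType, card_ord])
  let g : Iio (#X).ord ≃ X := ToType.mk.toEquiv.trans e.symm
  obtain ⟨i, hi, hFi⟩ := hJ.exists_notMem_of_subset_biUnion (ord_lt_ord.2 hX) hA
    (F := fun i => if h : i ∈ Iio (#X).ord then F (g ⟨i, h⟩) else ∅) fun α hα => by
      obtain ⟨x, hx⟩ := mem_iUnion.1 (hAF hα)
      refine mem_biUnion (g.symm x).2 ?_
      rwa [dif_pos (g.symm x).2, Subtype.coe_eta, Equiv.apply_symm_apply]
  exact ⟨g ⟨i, hi⟩, by rwa [dif_pos (mem_Iio.2 hi)] at hFi⟩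

end IsCompleteIdeal

section Tree

variable {T L : Type*} [LinearOrder L] {tlt : T → T → Prop} {lvl : T → L}
  {s u : Set T} {t t' t₀ : T} {ξ : L}

structure IsLeveledTree (tlt : T → T → Prop) (lvl : T → L) : Prop where
  lvl_lt_lvl : ∀ s t, tlt s t → lvl s < lvl t
  trichotomous_below : ∀ s s' t, tlt s t → tlt s' t → tlt s s' ∨ tlt s' s ∨ s = s'

/-- `SplitsAt lvl s u ξ` is the paper's `Δ(s, u) = ξ`. -/
def SplitsAt (lvl : T → L) (s u : Set T) (ξ : L) : Prop :=
  (∀ γ < ξ, ∀ t ∈ s, ∀ t' ∈ u, lvl t = γ → lvl t' = γ → t = t') ∧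
  (∃ t ∈ s, ∃ t' ∈ u, lvl t = ξ ∧ lvl t' = ξ ∧ t ≠ t')

theorem exists_splitsAt_of_ne [WellFoundedLT L] (hsu : s ≠ u)
    (hs : ∀ t ∈ u, ∃ t' ∈ s, lvl t' = lvl t) (hu : ∀ t ∈ s, ∃ t' ∈ u, lvl t' = lvl t) :
    ∃ ξ, SplitsAt lvl s u ξ := by
  set D := {ξ | ∃ t ∈ s, ∃ t' ∈ u, lvl t = ξ ∧ lvl t' = ξ ∧ t ≠ t'}
  have hD : D.Nonempty := by
    obtain ⟨x, hx⟩ := not_forall.1 (mt Set.ext hsu)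
    by_cases hxs : x ∈ s
    · obtain ⟨t', ht', hl⟩ := hu x hxs
      exact ⟨lvl x, x, hxs, t', ht', rfl, hl, fun h => hx ⟨fun _ => h ▸ ht', fun _ => hxs⟩⟩
    · have hxu : x ∈ u := by tauto
      obtain ⟨t, ht, hl⟩ := hs x hxu
      exact ⟨lvl x, t, ht, x, hxu, hl, rfl, fun h => hxs (h ▸ ht)⟩
  obtain ⟨ξ, hξ, hmin⟩ := wellFounded_lt.has_min D hD
  exact ⟨ξ, fun γ hγ t ht t' ht' hl hl' =>
    by_contra fun hne => hmin γ ⟨t, ht, t', ht', hl, hl', hne⟩ hγ, hξ⟩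

namespace IsLeveledTree

theorem eq_of_lvl_eq (hT : IsLeveledTree tlt lvl) (hs : IsChain tlt s) (ht : t ∈ s)
    (ht' : t' ∈ s) (hl : lvl t = lvl t') : t = t' := by
  by_contra hne
  rcases hs ht ht' hne with h | h
  exacts [(hT.lvl_lt_lvl _ _ h).ne hl, (hT.lvl_lt_lvl _ _ h).ne' hl]

theorem rel_of_lvl_lt (hT : IsLeveledTree tlt lvl) (hs : IsChain tlt s) (ht : t ∈ s)
    (ht₀ : t₀ ∈ s) (hl : lvl t < lvl t₀) : tlt t t₀ :=
  (hs ht ht₀ fun he => hl.ne (congrArg lvl he)).resolve_right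
    fun h => (hT.lvl_lt_lvl _ _ h).not_gt hl

theorem eq_of_rel_of_lvl_eq (hT : IsLeveledTree tlt lvl) (ht : tlt t t₀) (ht' : tlt t' t₀)
    (hl : lvl t = lvl t') : t = t' := by
  rcases hT.trichotomous_below _ _ _ ht ht' with h | h | h
  exacts [absurd hl (hT.lvl_lt_lvl _ _ h).ne, absurd hl (hT.lvl_lt_lvl _ _ h).ne', h]

theorem eq_of_mem_of_lvl_le (hT : IsLeveledTree tlt lvl) (hs : IsChain tlt s)
    (hu : IsChain tlt u) (h₀s : t₀ ∈ s) (h₀u : t₀ ∈ u) (ht : t ∈ s) (ht' : t' ∈ u)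
    (hl : lvl t = lvl t') (hle : lvl t ≤ lvl t₀) : t = t' := by
  rcases hle.lt_or_eq with hlt | heq
  · exact hT.eq_of_rel_of_lvl_eq (hT.rel_of_lvl_lt hs ht h₀s hlt)
      (hT.rel_of_lvl_lt hu ht' h₀u (hl ▸ hlt)) hl
  · exact (hT.eq_of_lvl_eq hs ht h₀s heq).trans (hT.eq_of_lvl_eq hu ht' h₀u (hl ▸ heq)).symm

theorem lt_of_splitsAt (hT : IsLeveledTree tlt lvl) (hs : IsChain tlt s) (hu : IsChain tlt u)
    (h₀s : t₀ ∈ s) (h₀u : t₀ ∈ u) (h : SplitsAt lvl s u ξ) : lvl t₀ < ξ := by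
  obtain ⟨-, t, ht, t', ht', rfl, hl, hne⟩ := h
  exact lt_of_not_ge fun hle => hne (hT.eq_of_mem_of_lvl_le hs hu h₀s h₀u ht ht' hl.symm hle)

end IsLeveledTree

end Tree

theorem IsCompleteIdeal.mem_of_splitsAt_mem {κ θ : Cardinal.{0}} {J : Set (Set Ordinal.{0})}
    {T : Type} {tlt : T → T → Prop} {lvl : T → Ordinal.{0}} {b : Ordinal → Set T}
    {A : Set Ordinal} {α : Ordinal} {t₀ : T}
    (hJ : IsCompleteIdeal κ J) (hκ : ℵ₀ ≤ κ) (hθκ : θ < κ) (hA : A ⊆ Iio κ.ord)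
    (hT : IsLeveledTree tlt lvl) (hlvl : ∀ t, lvl t < θ.ord)
    (hchain : ∀ β ∈ A, IsChain tlt (b β)) (hfull : ∀ β ∈ A, ∀ γ < θ.ord, ∃ t ∈ b β, lvl t = γ)
    (hinj : InjOn b A) (hα : α ∈ A) (ht₀ : ∀ β ∈ A, t₀ ∈ b β)
    (hsmall : ∀ ξ < θ.ord, lvl t₀ < ξ → {β ∈ A | SplitsAt lvl (b α) (b β) ξ} ∈ J) :
    A ∈ J := by
  refine hJ.mem_of_subset _ _ (hJ.union_mem (ofNat_lt_aleph0.trans_le hκ)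
    (hJ.singleton_mem hκ (hA hα))
    (hJ.biUnion_mem θ.ord (ord_lt_ord.2 hθκ)
      (fun ξ => {β | lvl t₀ < ξ ∧ β ∈ A ∧ SplitsAt lvl (b α) (b β) ξ}) fun ξ hξ => ?_)) ?_
  · by_cases hξ₀ : lvl t₀ < ξ
    · exact hJ.mem_of_subset _ _ (hsmall ξ hξ hξ₀) fun β hβ => hβ.2
    · exact hJ.mem_of_subset _ _ (hJ.empty_mem (aleph0_pos.trans_le hκ).ne')
        fun β hβ => (hξ₀ hβ.1).elim
  intro β hβ
  rcases eq_or_ne β α with rfl | hβα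
  · exact Or.inl rfl
  obtain ⟨ξ, hξ⟩ := exists_splitsAt_of_ne (hinj.ne hα hβ hβα.symm)
    (fun t _ => hfull α hα _ (hlvl t)) fun t _ => hfull β hβ _ (hlvl t)
  have hξθ : ξ < θ.ord := by
    obtain ⟨-, t, -, -, -, rfl, -⟩ := hξ
    exact hlvl t
  exact Or.inr (mem_biUnion hξθ
    ⟨hT.lt_of_splitsAt (hchain α hα) (hchain β hβ) (ht₀ α hα) (ht₀ β hβ) hξ, hβ, hξ⟩)

theorem stmt_18_general (θ κ : Cardinal.{0}) (hκunc : ℵ₀ < κ)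
    (hθreg : θ.IsRegular) (hθκ : θ < κ)
    -- a tree of height `θ`, all of whose levels have size `< κ`
    (T : Type) (tlt : T → T → Prop) (lvl : T → Ordinal.{0})
    (hlvl : ∀ t, lvl t < θ.ord)
    (hmono : ∀ s t, tlt s t → lvl s < lvl t)
    (hpred : ∀ s s' t, tlt s t → tlt s' t → (tlt s s' ∨ tlt s' s ∨ s = s'))
    (hlevel : ∀ γ < θ.ord, Cardinal.mk {t : T // lvl t = γ} < κ)
    -- an injective enumeration `⟨b β : β < κ⟩` of `θ`-branches
    (b : Ordinal → Set T)
    (hbchain : ∀ β < κ.ord, ∀ s ∈ b β, ∀ t ∈ b β, tlt s t ∨ tlt t s ∨ s = t)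
    (hbfull : ∀ β < κ.ord, ∀ γ < θ.ord, ∃ t ∈ b β, lvl t = γ)
    (hbinj : ∀ α β : Ordinal, α < β → β < κ.ord → b α ≠ b β)
    -- a `κ`-complete ideal `J` over `κ` extending the bounded ideal
    (J : Set (Set Ordinal.{0}))
    (hJdown : ∀ A A' : Set Ordinal, A' ∈ J → A ⊆ A' → A ∈ J)
    (hJcomplete : ∀ o < κ.ord, ∀ f : Ordinal → Set Ordinal,
      (∀ i < o, f i ∈ J) → (⋃ i ∈ Set.Iio o, f i) ∈ J)
    (hJbd : ∀ α < κ.ord, Set.Iio α ∈ J)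
    -- a `J`-positive set `B`
    (B : Set Ordinal) (hB : B ⊆ Set.Iio κ.ord) (hBpos : B ∉ J) :
    ∃ α ∈ B, otp {ξ : Ordinal | ξ < θ.ord ∧
      {β : Ordinal | β ∈ B ∧
        (∀ γ < ξ, ∀ t ∈ b α, ∀ t' ∈ b β, lvl t = γ → lvl t' = γ → t = t') ∧
        (∃ t ∈ b α, ∃ t' ∈ b β, lvl t = ξ ∧ lvl t' = ξ ∧ t ≠ t')} ∉ J} =
      Ordinal.lift.{1} θ.ord := by
  show ∃ α ∈ B, otp {ξ | ξ < θ.ord ∧ {β ∈ B | SplitsAt lvl (b α) (b β) ξ} ∉ J} = _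
  have hJ : IsCompleteIdeal κ J := ⟨hJdown, hJcomplete, hJbd⟩
  have hinj : InjOn b B := fun α hα β hβ hαβ => by
    by_contra hne
    rcases lt_or_gt_of_ne hne with h | h
    exacts [hbinj α β h (hB hβ) hαβ, hbinj β α h (hB hα) hαβ.symm]
  have hchain : ∀ β < κ.ord, IsChain tlt (b β) := fun β hβ s hs t ht hne =>
    (hbchain β hβ s hs t ht).imp_right (·.resolve_right hne)
  by_contra! hcon
  have hbdd : ∀ α ∈ B, ∃ η < θ.ord,
      ∀ ξ < θ.ord, {β ∈ B | SplitsAt lvl (b α) (b β) ξ} ∉ J → ξ < η := by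
    intro α hα
    by_contra! hunbdd
    exact hcon α hα (otp_eq_lift_ord_of_cofinal hθreg.cof_ord (fun ξ hξ => hξ.1)
      fun η hη => (hunbdd η hη).imp fun ξ ⟨hξ, hpos, hle⟩ => ⟨⟨hξ, hpos⟩, hle⟩)
  obtain ⟨η, hη, hB₁⟩ := hJ.exists_notMem_of_subset_biUnion (ord_lt_ord.2 hθκ) hBpos
    (F := fun η => {α ∈ B | ∀ ξ < θ.ord, {β ∈ B | SplitsAt lvl (b α) (b β) ξ} ∉ J → ξ < η})
    fun α hα => let ⟨η, hη, hαη⟩ := hbdd α hα; mem_biUnion hη ⟨hα, hαη⟩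
  obtain ⟨⟨t₀, rfl⟩, hB₂⟩ := hJ.exists_notMem_of_subset_iUnion (hlevel η hη) hB₁
    (F := fun t => {α | α ∈ _ ∧ t.1 ∈ b α}) fun α hα =>
      let ⟨t, ht, htη⟩ := hbfull α (hB hα.1) _ hη; mem_iUnion.2 ⟨⟨t, htη⟩, hα, ht⟩
  obtain ⟨α, ⟨hαB, hαη⟩, hα₀⟩ := hJ.nonempty_of_notMem (aleph0_pos.trans hκunc).ne' hB₂
  refine hB₂ (hJ.mem_of_splitsAt_mem hκunc.le hθκ (fun β hβ => hB hβ.1.1) ⟨hmono, hpred⟩ hlvl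
    (fun β hβ => hchain β (hB hβ.1.1)) (fun β hβ => hbfull β (hB hβ.1.1))
    (hinj.mono fun β hβ => hβ.1.1) ⟨⟨hαB, hαη⟩, hα₀⟩ (fun β hβ => hβ.2) fun ξ hξ hηξ => ?_)
  refine hJ.mem_of_subset _ {β ∈ B | SplitsAt lvl (b α) (b β) ξ} ?_ fun β hβ => ⟨hβ.1.1.1, hβ.2⟩
  by_contra hpos
  exact lt_asymm hηξ (hαη ξ hξ hpos)

theorem stmt_18 (θ κ : Cardinal.{0}) (hκreg : κ.IsRegular) (hκunc : ℵ₀ < κ)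
    (hθreg : θ.IsRegular) (hθκ : θ < κ)
    -- a tree of height `θ`, all of whose levels have size `< κ`
    (T : Type) (tlt : T → T → Prop) (lvl : T → Ordinal.{0})
    (hlvl : ∀ t, lvl t < θ.ord)
    (hmono : ∀ s t, tlt s t → lvl s < lvl t)
    (hpred : ∀ s s' t, tlt s t → tlt s' t → (tlt s s' ∨ tlt s' s ∨ s = s'))
    (hheight : ∀ γ < θ.ord, ∃ t, lvl t = γ)
    (hlevel : ∀ γ < θ.ord, Cardinal.mk {t : T // lvl t = γ} < κ)
    -- an injective enumeration `⟨b β : β < κ⟩` of `θ`-branches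
    (b : Ordinal → Set T)
    (hbchain : ∀ β < κ.ord, ∀ s ∈ b β, ∀ t ∈ b β, tlt s t ∨ tlt t s ∨ s = t)
    (hbfull : ∀ β < κ.ord, ∀ γ < θ.ord, ∃ t ∈ b β, lvl t = γ)
    (hbinj : ∀ α β : Ordinal, α < β → β < κ.ord → b α ≠ b β)
    -- a `κ`-complete ideal `J` over `κ` extending the bounded ideal
    (J : Set (Set Ordinal.{0}))
    (hJsub : ∀ A ∈ J, A ⊆ Set.Iio κ.ord)
    (hJdown : ∀ A A' : Set Ordinal, A' ∈ J → A ⊆ A' → A ∈ J)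
    (hJcomplete : ∀ o < κ.ord, ∀ f : Ordinal → Set Ordinal,
      (∀ i < o, f i ∈ J) → (⋃ i ∈ Set.Iio o, f i) ∈ J)
    (hJbd : ∀ α < κ.ord, Set.Iio α ∈ J)
    -- a `J`-positive set `B`
    (B : Set Ordinal) (hB : B ⊆ Set.Iio κ.ord) (hBpos : B ∉ J) :
    ∃ α ∈ B, otp {ξ : Ordinal | ξ < θ.ord ∧
      {β : Ordinal | β ∈ B ∧
        (∀ γ < ξ, ∀ t ∈ b α, ∀ t' ∈ b β, lvl t = γ → lvl t' = γ → t = t') ∧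
        (∃ t ∈ b α, ∃ t' ∈ b β, lvl t = ξ ∧ lvl t' = ξ ∧ t ≠ t')} ∉ J} =
      Ordinal.lift.{1} θ.ord :=
  stmt_18_general θ κ hκunc hθreg hθκ T tlt lvl hlvl hmono hpred hlevel b hbchain hbfull hbinj J
    hJdown hJcomplete hJbd B hB hBpos
end

section
/- Let κ be a regular uncountable cardinal and suppose c : [κ]² → θ witnesses U(κ, 2, θ, 3) with θ ∈ reg(κ). Then for all A, B ∈ [κ]^κ there exists η ∈ A such that otp(c[{η} ⊛ B]) = θ. -/
open Cardinal Ordinal Set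

/-!
If every `η ∈ A` had `otp (c[{η} ⊛ B]) < θ`, regularity of `θ` would bound these colours by some
`j η < θ`, and since `θ < κ = cf κ` one bound `i` would serve an unbounded `A' ⊆ A`. The closure
points of "next element of `A'`, then next element of `B`" are unbounded in `κ` because
`cf κ > ω`; each closure point `γ` yields a pair `η < β` with `η ∈ A'`, `β ∈ B`, lying between
`γ` and the next closure point. These `κ` many disjoint pairs are fed to `U(κ, 2, θ, 3)` at
colour `i`: it returns pairs `a < b` with `c(η_a, β_b) > i ≥ j η_a`, a contradiction.
-/

namespace Ordinal

universe u

variable {c κ : Cardinal.{u}} {S A B : Set Ordinal.{u}} {o a x : Ordinal.{u}}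

def UnboundedIn (S : Set Ordinal.{u}) (o : Ordinal.{u}) : Prop :=
  ∀ b < o, ∃ x ∈ S, b < x

theorem sSup_lt_ord_of_mk_lt (hc : c.IsRegular) (hS : S ⊆ Iio c.ord)
    (h : #S < Cardinal.lift.{u + 1} c) : sSup S < c.ord :=
  sSup_lt_of_lt_cof (by rwa [← lift_cof, hc.cof_ord]) hS

theorem unboundedIn_ord_of_mk_eq (hc : ℵ₀ ≤ c)
    (h : #S = Cardinal.lift.{u + 1} c) : UnboundedIn S c.ord := by
  intro b hb
  by_contra! hle
  have hsucc : (Order.succ b).card < c := lt_ord.1 ((isSuccLimit_ord hc).succ_lt hb)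
  have : #S ≤ Cardinal.lift.{u + 1} (Order.succ b).card := by
    rw [← Cardinal.mk_Iio_ordinal]
    exact Cardinal.mk_le_mk_of_subset fun x hx => Order.lt_succ_iff.2 (hle x hx)
  exact (h ▸ this).not_gt (Cardinal.lift_lt.2 hsucc)

theorem mk_eq_of_unboundedIn_ord (hc : c.IsRegular) (hS : S ⊆ Iio c.ord)
    (h : UnboundedIn S c.ord) : #S = Cardinal.lift.{u + 1} c := by
  refine le_antisymm ?_ (not_lt.1 fun hlt => ?_)
  · simpa using Cardinal.mk_le_mk_of_subset hS
  · obtain ⟨x, hx, hlt'⟩ := h _ (sSup_lt_ord_of_mk_lt hc hS hlt)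
    exact hlt'.not_ge (le_csSup ⟨c.ord, fun y hy => (hS hy).le⟩ hx)

-- The closure point is `nfp f (f a)`, the supremum of the iterates of `f` at `f a`.
theorem exists_closure_point_gt (ho : ℵ₀ < o.cof) {f : Ordinal.{u} → Ordinal.{u}}
    (hf : ∀ x < o, x < f x ∧ f x < o) (hmono : MonotoneOn f (Iio o)) (ha : a < o) :
    ∃ γ < o, a < γ ∧ ∀ x < γ, f x < γ := by
  have hγ : nfp f (f a) < o := nfp_lt_ord ho (fun x hx => (hf x hx).2) (hf a ha).2
  have hiter : ∀ n, f^[n] (f a) < o := fun n => (iterate_le_nfp f _ n).trans_lt hγ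
  refine ⟨_, hγ, (hf a ha).1.trans_le (le_nfp f (f a)), fun x hx => ?_⟩
  obtain ⟨n, hn⟩ := lt_nfp_iff.1 hx
  calc f x ≤ f^[n + 1] (f a) := by
        rw [Function.iterate_succ_apply']
        exact hmono (hx.trans hγ) (hiter n) hn.le
    _ < f^[n + 2] (f a) := by
        rw [Function.iterate_succ_apply' f (n + 1)]
        exact (hf _ (hiter _)).1
    _ ≤ nfp f (f a) := iterate_le_nfp f _ _

-- Since `sInf ∅ = 0`, this is only meaningful when `S` has elements above `x`.
noncomputable def nextAbove (S : Set Ordinal.{u}) (x : Ordinal.{u}) : Ordinal.{u} :=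
  sInf {y ∈ S | x < y}

theorem nextAbove_mem_and_gt (hS : UnboundedIn S o) (hx : x < o) :
    nextAbove S x ∈ S ∧ x < nextAbove S x :=
  csInf_mem (hS x hx)

theorem monotoneOn_nextAbove (hS : UnboundedIn S o) : MonotoneOn (nextAbove S) (Iio o) :=
  fun _ _ y hy hxy => csInf_le_csInf (OrderBot.bddBelow _) (hS y hy)
    fun _ hz => ⟨hz.1, hxy.trans_lt hz.2⟩

theorem exists_unboundedIn_sublevel {θ : Cardinal.{u}} (hκ : κ.IsRegular) (hθκ : θ < κ)
    (hA : UnboundedIn A κ.ord) {j : Ordinal.{u} → Ordinal.{u}} (hj : ∀ η ∈ A, j η < θ.ord) :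
    ∃ i < θ.ord, UnboundedIn {η ∈ A | j η ≤ i} κ.ord := by
  by_contra! h
  have hbound : ∀ i < θ.ord, ∃ b < κ.ord, ∀ η ∈ A, j η ≤ i → η ≤ b := by
    intro i hi
    simpa [UnboundedIn, and_imp] using h i hi
  choose! b hbκ hb using hbound
  have hsub : b '' Iio θ.ord ⊆ Iio κ.ord := image_subset_iff.2 hbκ
  have hsup : sSup (b '' Iio θ.ord) < κ.ord := by
    refine sSup_lt_ord_of_mk_lt hκ hsub (Cardinal.mk_image_le.trans_lt ?_)
    simpa using hθκ
  obtain ⟨η, hηA, hη⟩ := hA _ hsup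
  have hηi := hj η hηA
  exact hη.not_ge ((hb _ hηi η hηA le_rfl).trans
    (le_csSup (bddAbove_Iio.mono hsub) ⟨_, hηi, rfl⟩))

theorem exists_pairwise_disjoint_pairs (hκ : κ.IsRegular) (hκ₀ : ℵ₀ < κ)
    (hA : UnboundedIn A κ.ord) (hAκ : A ⊆ Iio κ.ord)
    (hB : UnboundedIn B κ.ord) (hBκ : B ⊆ Iio κ.ord) :
    ∃ 𝒜 : Set (Set Ordinal.{u}), #𝒜 = Cardinal.lift.{u + 1} κ ∧ 𝒜.Pairwise Disjoint ∧
      ∀ a ∈ 𝒜, ∃ η ∈ A, ∃ β ∈ B, η < β ∧ a = {η, β} := by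
  have hA' : ∀ x < κ.ord, nextAbove A x ∈ A ∧ x < nextAbove A x :=
    fun x hx => nextAbove_mem_and_gt hA hx
  set g := fun x => nextAbove B (nextAbove A x)
  have hg : ∀ x < κ.ord, g x ∈ B ∧ nextAbove A x < g x :=
    fun x hx => nextAbove_mem_and_gt hB (hAκ (hA' x hx).1)
  set D := {γ | γ < κ.ord ∧ ∀ x < γ, g x < γ}
  have hD : UnboundedIn D κ.ord := by
    intro b hb
    obtain ⟨γ, hγ, hbγ, hclosed⟩ := exists_closure_point_gt (by rwa [hκ.cof_ord])
      (fun x hx => ⟨(hA' x hx).2.trans (hg x hx).2, hBκ (hg x hx).1⟩)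
      ((monotoneOn_nextAbove hB).comp (monotoneOn_nextAbove hA)
        fun x hx => hAκ (hA' x hx).1) hb
    exact ⟨γ, ⟨hγ, hclosed⟩, hbγ⟩
  set P : Ordinal.{u} → Set Ordinal.{u} := fun γ => {nextAbove A γ, g γ}
  have hsep : ∀ γ ∈ D, ∀ γ' ∈ D, γ < γ' → ∀ x ∈ P γ, ∀ y ∈ P γ', x < y := by
    rintro γ ⟨hγ, -⟩ γ' ⟨hγ', hclosed'⟩ hlt x hx y hy
    have hx' : x ≤ g γ := by
      rcases hx with rfl | rfl
      exacts [(hg γ hγ).2.le, le_rfl]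
    have hy' : nextAbove A γ' ≤ y := by
      rcases hy with rfl | rfl
      exacts [le_rfl, (hg γ' hγ').2.le]
    calc x ≤ g γ := hx'
      _ < γ' := hclosed' γ hlt
      _ < nextAbove A γ' := (hA' γ' hγ').2
      _ ≤ y := hy'
  have hdisj : ∀ γ ∈ D, ∀ γ' ∈ D, γ ≠ γ' → Disjoint (P γ) (P γ') := by
    intro γ hγ γ' hγ' hne
    rcases hne.lt_or_gt with hlt | hlt
    · exact disjoint_left.2 fun x hx hx' => (hsep γ hγ γ' hγ' hlt x hx x hx').false
    · exact disjoint_right.2 fun x hx hx' => (hsep γ' hγ' γ hγ hlt x hx x hx').false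
  have hinj : InjOn P D := fun γ hγ γ' hγ' heq => by_contra fun hne =>
    (hdisj γ hγ γ' hγ' hne).ne_of_mem (mem_insert _ _) (heq ▸ mem_insert _ _) rfl
  refine ⟨P '' D, ?_, ?_, ?_⟩
  · rw [Cardinal.mk_image_eq_of_injOn P D hinj]
    exact mk_eq_of_unboundedIn_ord hκ (fun γ hγ => hγ.1) hD
  · rintro _ ⟨γ, hγ, rfl⟩ _ ⟨γ', hγ', rfl⟩ hne
    exact hdisj γ hγ γ' hγ' fun h => hne (congrArg P h)
  · rintro _ ⟨γ, ⟨hγ, -⟩, rfl⟩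
    exact ⟨_, (hA' γ hγ).1, _, (hg γ hγ).1, (hg γ hγ).2, rfl⟩

theorem lt_of_csSup_pair_lt_csInf_pair {α : Type*} [ConditionallyCompleteLinearOrder α]
    {a b a' b' : α} (h : sSup {a, b} < sInf {a', b'}) : a < b' := by
  rw [csSup_pair, csInf_pair] at h
  exact (le_sup_left.trans_lt h).trans_le inf_le_right

end Ordinal

-- `otp` passes `S` itself as the predicate of `Subrel`, which instance search does not see through.
instance (S : Set Ordinal.{0}) : IsWellOrder S (Subrel (· < ·) S) :=
  RelEmbedding.isWellOrder (Subrel.relEmbedding (· < ·) S)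

theorem card_otp (S : Set Ordinal.{0}) : (otp S).card = #S :=
  card_type _

theorem otp_le_of_subset_Iio {S : Set Ordinal.{0}} {o : Ordinal.{0}} (hS : S ⊆ Iio o) :
    otp S ≤ Ordinal.lift.{1} o :=
  typein_ordinal o ▸ (Subrel.inclusionEmbedding (· < ·) hS).ordinal_type_le

theorem sSup_lt_ord_of_otp_ne {c : Cardinal.{0}} (hc : c.IsRegular) {S : Set Ordinal.{0}}
    (hS : S ⊆ Iio c.ord) (h : otp S ≠ Ordinal.lift.{1} c.ord) : sSup S < c.ord := by
  apply Ordinal.sSup_lt_ord_of_mk_lt hc hS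
  rw [← card_otp, ← lt_ord, ← lift_ord]
  exact (otp_le_of_subset_Iio hS).lt_of_ne h

theorem stmt_19 (κ θ : Cardinal.{0}) (hκreg : κ.IsRegular) (hκunc : ℵ₀ < κ)
    (hθreg : θ.IsRegular) (hθκ : θ < κ)
    (c : Ordinal.{0} → Ordinal.{0} → Ordinal.{0})
    (hcθ : ∀ α β : Ordinal, α < β → β < κ.ord → c α β < θ.ord)
    -- `c` witnesses `U(κ, 2, θ, 3)`
    (hU : ∀ σ : Cardinal, σ < 3 →
      ∀ 𝒜 : Set (Set Ordinal.{0}),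
        (∀ a ∈ 𝒜, a ⊆ Set.Iio κ.ord ∧ Cardinal.mk ↥a = Cardinal.lift.{1,0} σ) →
        (∀ a ∈ 𝒜, ∀ b ∈ 𝒜, a ≠ b → Disjoint a b) →
        Cardinal.mk ↥𝒜 = Cardinal.lift.{1,0} κ →
        ∀ i < θ.ord, ∃ a ∈ 𝒜, ∃ b ∈ 𝒜, sSup a < sInf b ∧
          ∀ x ∈ a, ∀ y ∈ b, i < c x y)
    (A B : Set Ordinal)
    (hA : A ⊆ Set.Iio κ.ord) (hAκ : Cardinal.mk ↥A = Cardinal.lift.{1,0} κ)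
    (hB : B ⊆ Set.Iio κ.ord) (hBκ : Cardinal.mk ↥B = Cardinal.lift.{1,0} κ) :
    ∃ η ∈ A, otp {x : Ordinal | ∃ β ∈ B, η < β ∧ c η β = x} =
      Ordinal.lift.{1} θ.ord := by
  by_contra! hne
  set values : Ordinal → Set Ordinal := fun η => {x | ∃ β ∈ B, η < β ∧ c η β = x}
  have hvalues : ∀ η, values η ⊆ Iio θ.ord := by
    rintro η _ ⟨β, hβ, hηβ, rfl⟩
    exact hcθ η β hηβ (hB hβ)
  have hbounded : ∀ η ∈ A, sSup (values η) < θ.ord :=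
    fun η hη => sSup_lt_ord_of_otp_ne hθreg (hvalues η) (hne η hη)
  obtain ⟨i, hi, hAi⟩ := exists_unboundedIn_sublevel hκreg hθκ
    (unboundedIn_ord_of_mk_eq hκreg.aleph0_le hAκ) hbounded
  obtain ⟨𝒜, h𝒜κ, h𝒜disj, h𝒜pairs⟩ := exists_pairwise_disjoint_pairs hκreg hκunc hAi
    (fun η hη => hA hη.1) (unboundedIn_ord_of_mk_eq hκreg.aleph0_le hBκ) hB
  have h𝒜 : ∀ a ∈ 𝒜, a ⊆ Iio κ.ord ∧ #a = Cardinal.lift.{1, 0} 2 := by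
    intro a ha
    obtain ⟨η, hη, β, hβ, hηβ, rfl⟩ := h𝒜pairs a ha
    refine ⟨insert_subset (hA hη.1) (singleton_subset_iff.2 (hB hβ)), ?_⟩
    simp [Finset.card_pair hηβ.ne]
  obtain ⟨a, ha, b, hb, hab, hcab⟩ := hU 2 (by norm_num) 𝒜 h𝒜 h𝒜disj h𝒜κ i hi
  obtain ⟨η, ⟨-, hηi⟩, β, -, -, rfl⟩ := h𝒜pairs a ha
  obtain ⟨η', -, β', hβ', -, rfl⟩ := h𝒜pairs b hb
  have hle : c η β' ≤ sSup (values η) := le_csSup (bddAbove_Iio.mono (hvalues η))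
    ⟨β', hβ', lt_of_csSup_pair_lt_csInf_pair hab, rfl⟩
  exact (hcab η (mem_insert _ _) β' (mem_insert_of_mem _ rfl)).not_ge (hle.trans hηi)
end
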